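/- arXiv:math/0401020 — 8 statements merged into one kernel-verified Lean document; each statement's English description precedes it below -/
import Mathlib

section
/- The image Ψ(R^N) of the map Ψ(x) = p0 + A(x) - (1/2)‖x‖² w equals the set E^N = {p ∈ V^{N+1} : ⟨p,w⟩ = 1}. -/
/-! As `p₀` and `w` are null with `⟨p₀, w⟩ = 1`, a vector `p` with `⟨p, w⟩ = 1` is
`p₀ + v + c w` with `c = ⟨p, p₀⟩` and `v ⊥ p₀, w`, and then `⟨p, p⟩ = ⟨v, v⟩ + 2c`. So `p` lies on
the light cone exactly when `c = -⟨v, v⟩/2`, and the admissible `v` are the `A x`, with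
`⟨A x, A x⟩ = ‖x‖²`. -/

open scoped RealInnerProductSpace

noncomputable section

/-- The Lorentz (Minkowski) scalar product of signature `(+,...,+,-)` on
`EuclideanSpace ℝ (Fin (k+1))`: the last coordinate is timelike. -/
def minkL {k : ℕ} (x y : EuclideanSpace ℝ (Fin (k + 1))) : ℝ :=
  (∑ i : Fin k, x i.castSucc * y i.castSucc) - x (Fin.last k) * y (Fin.last k)

namespace LinearMap.BilinForm.IsSymm

variable {K M : Type*} [Field K] [CharZero K] [AddCommGroup M] [Module K M]
  {B : LinearMap.BilinForm K M} {p₀ w : M}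

theorem image_orthogonal_eq_isotropic_slice (hB : B.IsSymm) (hp₀ : B p₀ p₀ = 0) (hw : B w w = 0)
    (hp₀w : B p₀ w = 1) :
    (fun v ↦ p₀ + v - (B v v / 2) • w) '' {v | B v p₀ = 0 ∧ B v w = 0}
      = {p | B p p = 0 ∧ B p w = 1} := by
  have hwp₀ : B w p₀ = 1 := hB.eq w p₀ ▸ hp₀w
  ext p
  constructor
  · rintro ⟨v, ⟨hvp₀, hvw⟩, rfl⟩
    have hp₀v : B p₀ v = 0 := hB.eq p₀ v ▸ hvp₀
    have hwv : B w v = 0 := hB.eq w v ▸ hvw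
    constructor <;>
    · simp only [map_add, map_sub, map_smul, LinearMap.add_apply, LinearMap.sub_apply,
        LinearMap.smul_apply, smul_eq_mul, hp₀, hw, hp₀w, hwp₀, hvp₀, hvw, hp₀v, hwv]
      ring
  · rintro ⟨hpp, hpw⟩
    have hwp : B w p = 1 := hB.eq w p ▸ hpw
    have hp₀p : B p₀ p = B p p₀ := hB.eq p₀ p
    have hvv : B (p - p₀ - B p p₀ • w) (p - p₀ - B p p₀ • w) = -2 * B p p₀ := by
      simp only [map_sub, map_smul, LinearMap.sub_apply, LinearMap.smul_apply, smul_eq_mul,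
        hp₀, hw, hpw, hwp₀, hp₀w, hpp, hwp, hp₀p]
      ring
    -- the component of `p` orthogonal to `p₀` and `w`
    refine ⟨p - p₀ - B p p₀ • w, ⟨?_, ?_⟩, ?_⟩
    · simp only [map_sub, map_smul, LinearMap.sub_apply, LinearMap.smul_apply, smul_eq_mul,
        hp₀, hwp₀]
      ring
    · simp only [map_sub, map_smul, LinearMap.sub_apply, LinearMap.smul_apply, smul_eq_mul,
        hw, hpw, hp₀w]
      ring
    · simp only [hvv]
      module

end LinearMap.BilinForm.IsSymm

def minkForm (k : ℕ) : LinearMap.BilinForm ℝ (EuclideanSpace ℝ (Fin (k + 1))) :=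
  LinearMap.mk₂ ℝ minkL
    (fun x y z ↦ by
      simp only [minkL, PiLp.add_apply, add_mul, Finset.sum_add_distrib]
      ring)
    (fun c x z ↦ by
      simp only [minkL, PiLp.smul_apply, smul_eq_mul, Finset.mul_sum, mul_sub, mul_assoc])
    (fun x y z ↦ by
      simp only [minkL, PiLp.add_apply, mul_add, Finset.sum_add_distrib]
      ring)
    (fun c x z ↦ by
      simp only [minkL, PiLp.smul_apply, smul_eq_mul, Finset.mul_sum, mul_sub, mul_left_comm])

@[simp] theorem minkForm_apply {k : ℕ} (x y : EuclideanSpace ℝ (Fin (k + 1))) :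
    minkForm k x y = minkL x y := rfl

theorem minkForm_isSymm (k : ℕ) : (minkForm k).IsSymm :=
  ⟨fun x y ↦ by simp only [minkForm_apply, minkL, mul_comm]⟩

/-- the image of `Ψ x = p0 + A x - (‖x‖²/2) • w`, with `A` a linear isometry
of `ℝ^N` onto `span{p0,w}ᗮ`, is `E^N = {p ∈ V^{N+1} : ⟨p,w⟩ = 1}`. -/
theorem image_of_Psi_eq_EN (N : ℕ)
    (w p0 : EuclideanSpace ℝ (Fin (N + 2)))
    (A : EuclideanSpace ℝ (Fin N) →ₗ[ℝ] EuclideanSpace ℝ (Fin (N + 2)))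
    (hw : minkL w w = 0) (hp0 : minkL p0 p0 = 0) (hp0w : minkL p0 w = 1)
    (hA : ∀ x y, minkL (A x) (A y) = ⟪x, y⟫)
    (hAp0 : ∀ x, minkL (A x) p0 = 0) (hAw : ∀ x, minkL (A x) w = 0)
    (hAsurj : ∀ v, minkL v p0 = 0 → minkL v w = 0 → v ∈ Set.range A) :
    Set.range (fun x : EuclideanSpace ℝ (Fin N) => p0 + A x - (‖x‖ ^ 2 / 2) • w)
      = {p | minkL p p = 0 ∧ minkL p w = 1} := by
  have hrange : Set.range A = {v | minkForm (N + 1) v p0 = 0 ∧ minkForm (N + 1) v w = 0} :=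
    Set.Subset.antisymm (Set.range_subset_iff.2 fun x ↦ ⟨hAp0 x, hAw x⟩)
      fun v hv ↦ hAsurj v hv.1 hv.2
  have hPsi : (fun x : EuclideanSpace ℝ (Fin N) => p0 + A x - (‖x‖ ^ 2 / 2) • w)
      = (fun v ↦ p0 + v - (minkForm (N + 1) v v / 2) • w) ∘ A := by
    ext1 x
    simp only [Function.comp_apply, minkForm_apply, hA, real_inner_self_eq_norm_sq]
  rw [hPsi, Set.range_comp, hrange,
    (minkForm_isSymm _).image_orthogonal_eq_isotropic_slice hp0 hw hp0w]
  rfl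
end
end

section
/- Let S = E^N ∩ {v}^⊥ where v is a spacelike unit vector in L^{N+2}. Then under the isometry Ψ = Ψ_{p0,w,A} : R^N → E^N, the preimage Ψ^{-1}(S) is a hyperplane in R^N if and only if ⟨v,w⟩ = 0, and if ⟨v,w⟩ = h ≠ 0 then Ψ^{-1}(S) is a Euclidean sphere of radius 1/|h|. -/
open scoped RealInnerProductSpace

noncomputable section

/-! Decompose `v = A a + h • p0 + β • w` with `h = ⟨v, w⟩` and `β = ⟨v, p0⟩`. Then
`⟨Ψ x, v⟩ = β + ⟪a, x⟫ - h ‖x‖² / 2` and `1 = ⟨v, v⟩ = ‖a‖² + 2 h β`. For `h = 0` the equation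
`⟨Ψ x, v⟩ = 0` is affine with `a ≠ 0`; for `h ≠ 0`, completing the square turns it into
`‖x - a / h‖² = 1 / h²`. Finally a hyperplane is never a sphere: the sphere meets the normal line
through its centre in two points at different heights. -/

def minkLForm (k : ℕ) : LinearMap.BilinForm ℝ (EuclideanSpace ℝ (Fin (k + 1))) :=
  LinearMap.mk₂ ℝ minkL
    (fun x y z => by simp only [minkL, PiLp.add_apply, add_mul, Finset.sum_add_distrib]; ring)
    (fun r x z => by
      simp only [minkL, PiLp.smul_apply, smul_eq_mul, Finset.mul_sum, mul_sub, mul_assoc])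
    (fun x y z => by simp only [minkL, PiLp.add_apply, mul_add, Finset.sum_add_distrib]; ring)
    (fun r x z => by
      simp only [minkL, PiLp.smul_apply, smul_eq_mul, Finset.mul_sum, mul_sub, mul_left_comm])

theorem minkLForm_apply {k : ℕ} (x y : EuclideanSpace ℝ (Fin (k + 1))) :
    minkLForm k x y = minkL x y := rfl

theorem minkLForm_isSymm (k : ℕ) : (minkLForm k).IsSymm :=
  LinearMap.BilinForm.isSymm_def.2 fun x y => by simp only [minkLForm_apply, minkL, mul_comm]

section LightConeModel

variable {V E : Type*} [AddCommGroup V] [Module ℝ V]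
  [NormedAddCommGroup E] [InnerProductSpace ℝ E]
  {B : LinearMap.BilinForm ℝ V} {w p0 : V} {A : E →ₗ[ℝ] V}

theorem exists_eq_add_smul_add_smul (hB : B.IsSymm) (hw : B w w = 0) (hp0 : B p0 p0 = 0)
    (hp0w : B p0 w = 1) (hAsurj : ∀ z, B z p0 = 0 → B z w = 0 → z ∈ Set.range A) (v : V) :
    ∃ a, v = A a + B v w • p0 + B v p0 • w := by
  have hwp0 : B w p0 = 1 := by rw [hB.eq, hp0w]
  obtain ⟨a, ha⟩ := hAsurj (v - B v w • p0 - B v p0 • w)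
    (by simp [hp0, hwp0]) (by simp [hw, hp0w])
  exact ⟨a, by rw [ha]; abel⟩

variable (hB : B.IsSymm) (hw : B w w = 0) (hp0 : B p0 p0 = 0) (hp0w : B p0 w = 1)
  (hA : ∀ x y, B (A x) (A y) = ⟪x, y⟫) (hAp0 : ∀ x, B (A x) p0 = 0) (hAw : ∀ x, B (A x) w = 0)
include hB hw hp0 hp0w hA hAp0 hAw

theorem apply_add_smul_add_smul (a x : E) (h β : ℝ) :
    B (p0 + A x - (‖x‖ ^ 2 / 2) • w) (A a + h • p0 + β • w) = β + ⟪a, x⟫ - ‖x‖ ^ 2 / 2 * h := by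
  have hwp0 : B w p0 = 1 := by rw [hB.eq, hp0w]
  simp [hB.eq p0 (A a), hB.eq w (A a), hA, hAp0, hAw, hp0, hw, hp0w, hwp0, real_inner_comm]

theorem apply_self_add_smul_add_smul (a : E) (h β : ℝ) :
    B (A a + h • p0 + β • w) (A a + h • p0 + β • w) = ‖a‖ ^ 2 + 2 * h * β := by
  have hwp0 : B w p0 = 1 := by rw [hB.eq, hp0w]
  simp [hB.eq p0 (A a), hB.eq w (A a), hA, hAp0, hAw, hp0, hw, hp0w, hwp0]
  ring

theorem exists_apply_eq_quadratic
    (hAsurj : ∀ z, B z p0 = 0 → B z w = 0 → z ∈ Set.range A) {v : V} (hv : B v v = 1) :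
    ∃ (a : E) (β : ℝ), ‖a‖ ^ 2 + 2 * B v w * β = 1 ∧
      ∀ x, B (p0 + A x - (‖x‖ ^ 2 / 2) • w) v = β + ⟪a, x⟫ - ‖x‖ ^ 2 / 2 * B v w := by
  obtain ⟨a, hv_eq⟩ := exists_eq_add_smul_add_smul hB hw hp0 hp0w hAsurj v
  refine ⟨a, B v p0, ?_, fun x => ?_⟩
  · rw [← apply_self_add_smul_add_smul hB hw hp0 hp0w hA hAp0 hAw, ← hv_eq, hv]
  · conv_lhs => rw [hv_eq]
    exact apply_add_smul_add_smul hB hw hp0 hp0w hA hAp0 hAw a x _ _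

end LightConeModel

section Euclidean

variable {E : Type*} [NormedAddCommGroup E] [InnerProductSpace ℝ E]

theorem setOf_quadratic_eq_zero_eq_sphere {a : E} {β h : ℝ} (hh : h ≠ 0)
    (hnorm : ‖a‖ ^ 2 + 2 * h * β = 1) :
    {x | β + ⟪a, x⟫ - ‖x‖ ^ 2 / 2 * h = 0} = Metric.sphere (h⁻¹ • a) (1 / |h|) := by
  have complete_square : ∀ x : E, ‖x - h⁻¹ • a‖ ^ 2 - (1 / |h|) ^ 2 =
      -(2 / h) * (β + ⟪a, x⟫ - ‖x‖ ^ 2 / 2 * h) := by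
    intro x
    rw [norm_sub_sq_real, inner_smul_right, norm_smul, norm_inv, Real.norm_eq_abs, mul_pow,
      inv_pow, div_pow, one_pow, sq_abs, real_inner_comm]
    field_simp
    linear_combination hnorm
  ext x
  rw [Set.mem_ofPred_eq, Metric.mem_sphere, dist_eq_norm,
    ← pow_left_inj₀ (norm_nonneg _) (by positivity) two_ne_zero,
    ← sub_eq_zero (a := ‖x - h⁻¹ • a‖ ^ 2), complete_square]
  simp [hh]

theorem setOf_inner_eq_ne_sphere {a : E} (ha : a ≠ 0) (b : ℝ) (c : E) {r : ℝ} (hr : 0 < r) :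
    {x | ⟪a, x⟫ = b} ≠ Metric.sphere c r := by
  intro heq
  have hmem : ∀ s : ℝ, |s| = r / ‖a‖ → ⟪a, c + s • a⟫ = b := fun s hs => by
    have : c + s • a ∈ Metric.sphere c r := by
      rw [Metric.mem_sphere, dist_eq_norm, add_sub_cancel_left, norm_smul, Real.norm_eq_abs, hs,
        div_mul_cancel₀ _ (norm_ne_zero_iff.2 ha)]
    rwa [← heq] at this
  have hpos := hmem (r / ‖a‖) (abs_of_pos (by positivity))
  have hneg := hmem (-(r / ‖a‖)) (by rw [abs_neg, abs_of_pos (by positivity)])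
  rw [inner_add_right, inner_smul_right, real_inner_self_eq_norm_sq] at hpos hneg
  have : r / ‖a‖ * ‖a‖ ^ 2 = 0 := by linarith
  exact absurd this (by positivity)

end Euclidean

theorem hypersphere_in_light_cone_model_general (N : ℕ)
    (w p0 : EuclideanSpace ℝ (Fin (N + 2)))
    (A : EuclideanSpace ℝ (Fin N) →ₗ[ℝ] EuclideanSpace ℝ (Fin (N + 2)))
    (hw : minkL w w = 0) (hp0 : minkL p0 p0 = 0) (hp0w : minkL p0 w = 1)
    (hA : ∀ x y, minkL (A x) (A y) = ⟪x, y⟫)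
    (hAp0 : ∀ x, minkL (A x) p0 = 0) (hAw : ∀ x, minkL (A x) w = 0)
    (hAsurj : ∀ z, minkL z p0 = 0 → minkL z w = 0 → z ∈ Set.range A)
    (v : EuclideanSpace ℝ (Fin (N + 2))) (hv : minkL v v = 1) :
    ∀ Ψ : EuclideanSpace ℝ (Fin N) → EuclideanSpace ℝ (Fin (N + 2)),
      (Ψ = fun x => p0 + A x - (‖x‖ ^ 2 / 2) • w) →
      (((∃ (a : EuclideanSpace ℝ (Fin N)) (b : ℝ), a ≠ 0 ∧
          {x | minkL (Ψ x) v = 0} = {x | ⟪a, x⟫ = b}) ↔ minkL v w = 0) ∧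
        (∀ h : ℝ, minkL v w = h → h ≠ 0 →
          ∃ c, {x | minkL (Ψ x) v = 0} = Metric.sphere c (1 / |h|))) := by
  rintro Ψ rfl
  obtain ⟨a, β, hnorm, hΨv⟩ := exists_apply_eq_quadratic (B := minkLForm (N + 1))
    (minkLForm_isSymm _) hw hp0 hp0w hA hAp0 hAw hAsurj hv
  simp only [minkLForm_apply] at hnorm hΨv
  have hsphere : ∀ h : ℝ, minkL v w = h → h ≠ 0 →
      ∃ c, {x | minkL (p0 + A x - (‖x‖ ^ 2 / 2) • w) v = 0} = Metric.sphere c (1 / |h|) := by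
    rintro h rfl hh
    exact ⟨_, by simp_rw [hΨv]; exact setOf_quadratic_eq_zero_eq_sphere hh hnorm⟩
  refine ⟨⟨fun ⟨a', b, ha', hplane⟩ => ?_, fun hvw => ⟨a, -β, ?_, ?_⟩⟩, hsphere⟩
  · by_contra hvw
    obtain ⟨c, hc⟩ := hsphere _ rfl hvw
    exact setOf_inner_eq_ne_sphere ha' b c (by positivity) (hplane.symm.trans hc)
  · rintro rfl
    simp [hvw] at hnorm
  · ext x
    simp only [Set.mem_ofPred_eq, hΨv, hvw, mul_zero, sub_zero]
    constructor <;> intro hx <;> linarith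

/-- for a spacelike unit vector `v`, the preimage under `Ψ` of the
hypersphere `S = E^N ∩ {v}ᗮ` is a hyperplane in `ℝ^N` iff `⟨v,w⟩ = 0`, and if
`⟨v,w⟩ = h ≠ 0` it is a Euclidean sphere of radius `1/|h|`. -/
theorem hypersphere_in_light_cone_model (N : ℕ) (hN : 1 ≤ N)
    (w p0 : EuclideanSpace ℝ (Fin (N + 2)))
    (A : EuclideanSpace ℝ (Fin N) →ₗ[ℝ] EuclideanSpace ℝ (Fin (N + 2)))
    (hw : minkL w w = 0) (hp0 : minkL p0 p0 = 0) (hp0w : minkL p0 w = 1)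
    (hA : ∀ x y, minkL (A x) (A y) = ⟪x, y⟫)
    (hAp0 : ∀ x, minkL (A x) p0 = 0) (hAw : ∀ x, minkL (A x) w = 0)
    (hAsurj : ∀ z, minkL z p0 = 0 → minkL z w = 0 → z ∈ Set.range A)
    (v : EuclideanSpace ℝ (Fin (N + 2))) (hv : minkL v v = 1) :
    ∀ Ψ : EuclideanSpace ℝ (Fin N) → EuclideanSpace ℝ (Fin (N + 2)),
      (Ψ = fun x => p0 + A x - (‖x‖ ^ 2 / 2) • w) →
      (((∃ (a : EuclideanSpace ℝ (Fin N)) (b : ℝ), a ≠ 0 ∧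
          {x | minkL (Ψ x) v = 0} = {x | ⟪a, x⟫ = b}) ↔ minkL v w = 0) ∧
        (∀ h : ℝ, minkL v w = h → h ≠ 0 →
          ∃ c, {x | minkL (Ψ x) v = 0} = Metric.sphere c (1 / |h|))) :=
  hypersphere_in_light_cone_model_general N w p0 A hw hp0 hp0w hA hAp0 hAw hAsurj v hv
end
end

section
/- Let f : M^n → R^N be a conformal immersion with conformal factor φ > 0 and let F = φ^{-1}(Ψ ∘ f) be the associated isometric immersion into the light cone. Then the second fundamental form of F satisfies α_F(X,Y) = φ Hess(φ^{-1})(X,Y) F + φ^{-1} dΨ(α_f(X,Y)) - ⟨X,Y⟩ η, where η = φ w - d(Ψ∘f)(grad φ^{-1}), and Hess, grad are computed in the metric induced by F. -/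
open scoped RealInnerProductSpace

noncomputable section

set_option maxHeartbeats 1000000

lemma tang_formula {n N : ℕ}
    (f : EuclideanSpace ℝ (Fin n) → EuclideanSpace ℝ (Fin N))
    (φ : EuclideanSpace ℝ (Fin n) → ℝ)
    (αf : EuclideanSpace ℝ (Fin n) → EuclideanSpace ℝ (Fin n) →
      EuclideanSpace ℝ (Fin n) → EuclideanSpace ℝ (Fin N))
    (hf : ContDiff ℝ (⊤ : ℕ∞) f) (hφ : ContDiff ℝ (⊤ : ℕ∞) φ) (hφpos : ∀ x, 0 < φ x)
    (hconf : ∀ x u v, ⟪fderiv ℝ f x u, fderiv ℝ f x v⟫ = (φ x) ^ 2 * ⟪u, v⟫)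
    (hαf_normal : ∀ x u v z, ⟪αf x u v, fderiv ℝ f x z⟫ = 0)
    (hαf_tangent : ∀ x u v,
      fderiv ℝ (fun y => fderiv ℝ f y u) x v - αf x u v ∈ Set.range (fderiv ℝ f x))
    (x u v : EuclideanSpace ℝ (Fin n)) :
    fderiv ℝ (fun y => fderiv ℝ f y u) x v
      = αf x u v + ((φ x)⁻¹ * fderiv ℝ φ x v) • fderiv ℝ f x u
        + ((φ x)⁻¹ * fderiv ℝ φ x u) • fderiv ℝ f x v
        - ((φ x)⁻¹ * ⟪u, v⟫) • fderiv ℝ f x (gradient φ x) := by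
  have hp : φ x ≠ 0 := (hφpos x).ne'
  have hfd : ∀ y, HasFDerivAt f (fderiv ℝ f y) y :=
    fun y => (hf.differentiable (by simp) y).hasFDerivAt
  have hφd : ∀ y, HasFDerivAt φ (fderiv ℝ φ y) y :=
    fun y => (hφ.differentiable (by simp) y).hasFDerivAt
  have hf' : ContDiff ℝ (⊤ : ℕ∞) (fderiv ℝ f) := hf.fderiv_right (by simp)
  have hD2 : HasFDerivAt (fderiv ℝ f) (fderiv ℝ (fderiv ℝ f) x) x :=
    (hf'.differentiable (by simp) x).hasFDerivAt
  set f'' := fderiv ℝ (fderiv ℝ f) x with hf''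
  have hDa : ∀ a : EuclideanSpace ℝ (Fin n), HasFDerivAt (fun y => fderiv ℝ f y a)
      ((ContinuousLinearMap.apply ℝ (EuclideanSpace ℝ (Fin N)) a).comp f'') x :=
    fun a => ((ContinuousLinearMap.apply ℝ (EuclideanSpace ℝ (Fin N)) a).hasFDerivAt).comp x hD2
  have hDval : ∀ a b, fderiv ℝ (fun y => fderiv ℝ f y a) x b = f'' b a := by
    intro a b
    rw [(hDa a).fderiv]
    rfl
  have hsymm : ∀ a b, f'' a b = f'' b a :=
    fun a b => second_derivative_symmetric hfd hD2 a b
  have key1 : ∀ a c d, ⟪fderiv ℝ f x a, f'' d c⟫ + ⟪f'' d a, fderiv ℝ f x c⟫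
      = 2 * φ x * fderiv ℝ φ x d * ⟪a, c⟫ := by
    intro a c d
    have h1 := ((hDa a).inner ℝ (hDa c))
    have hsq : HasFDerivAt (fun y => φ y * φ y)
        (φ x • fderiv ℝ φ x + φ x • fderiv ℝ φ x) x := (hφd x).mul (hφd x)
    have h2 := hsq.mul_const (⟪a, c⟫ : ℝ)
    have heq : (fun y => ⟪fderiv ℝ f y a, fderiv ℝ f y c⟫)
        = fun y => (φ y * φ y) * ⟪a, c⟫ := by
      funext y
      rw [hconf]; ring
    rw [heq] at h1
    have := h1.unique h2
    have happ := congrArg (fun (L : EuclideanSpace ℝ (Fin n) →L[ℝ] ℝ) => L d) this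
    simp only [ContinuousLinearMap.comp_apply, ContinuousLinearMap.prod_apply,
      fderivInnerCLM_apply, ContinuousLinearMap.smul_apply, ContinuousLinearMap.add_apply,
      ContinuousLinearMap.apply_apply, smul_eq_mul] at happ
    rw [happ]; ring
  have key2 : ∀ z, ⟪f'' v u, fderiv ℝ f x z⟫
      = φ x * (fderiv ℝ φ x v * ⟪u, z⟫ + fderiv ℝ φ x u * ⟪v, z⟫
        - fderiv ℝ φ x z * ⟪u, v⟫) := by
    intro z
    have e1 := key1 u z v
    have e2 := key1 v z u
    have e3 := key1 u v z
    rw [hsymm v z] at e1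
    rw [hsymm u z, hsymm u v] at e2
    rw [real_inner_comm (fderiv ℝ f x v) (f'' z u)] at e3
    linarith [e1, e2, e3]
  obtain ⟨s0, hs0⟩ := hαf_tangent x u v
  set s := ((φ x)⁻¹ * fderiv ℝ φ x v) • u + ((φ x)⁻¹ * fderiv ℝ φ x u) • v
      - ((φ x)⁻¹ * ⟪u, v⟫) • gradient φ x with hsdef
  have hgradφ : ∀ z : EuclideanSpace ℝ (Fin n), ⟪gradient φ x, z⟫ = fderiv ℝ φ x z := by
    intro z
    exact InnerProductSpace.toDual_symm_apply
  have hsz : ∀ z : EuclideanSpace ℝ (Fin n), ⟪s, z⟫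
      = (φ x)⁻¹ * (fderiv ℝ φ x v * ⟪u, z⟫ + fderiv ℝ φ x u * ⟪v, z⟫
        - ⟪u, v⟫ * fderiv ℝ φ x z) := by
    intro z
    simp only [hsdef, inner_add_left, inner_sub_left, inner_smul_left, RCLike.star_def,
      conj_trivial, hgradφ]
    ring
  have hzero : ∀ z : EuclideanSpace ℝ (Fin n), ⟪s0 - s, z⟫ = 0 := by
    intro z
    have h1 := hconf x (s0 - s) z
    rw [map_sub, inner_sub_left] at h1
    rw [hs0, inner_sub_left, hαf_normal, sub_zero, hDval, key2, hconf x s z, hsz] at h1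
    have h4 : (φ x) ^ 2 * ⟪s0 - s, z⟫ = 0 := by
      rw [← h1]
      field_simp
      ring
    rcases mul_eq_zero.mp h4 with h | h
    · exact absurd h (pow_ne_zero 2 hp)
    · exact h
  have hs0s : s0 = s := sub_eq_zero.mp (inner_self_eq_zero.mp (hzero (s0 - s)))
  have hmain : fderiv ℝ (fun y => fderiv ℝ f y u) x v = αf x u v + fderiv ℝ f x s := by
    rw [← hs0s, ← sub_eq_iff_eq_add']
    exact hs0.symm
  rw [hmain, hsdef, map_sub, map_add, ContinuousLinearMap.map_smul,
    ContinuousLinearMap.map_smul, ContinuousLinearMap.map_smul]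
  abel

/-- Lemma on second fundamental forms: let `f : M^n → ℝ^N` be a conformal
immersion with conformal factor `φ > 0` (so that the domain metric, here the Euclidean
metric, is the metric induced by `F`), `α_f` its second fundamental form (the component
of the second derivative of `f` normal to `f`), and `F = φ⁻¹ • (Ψ ∘ f)` the associated
isometric immersion into the light cone. Then the second fundamental form of `F`
(the second derivative of `F`, since the induced metric is Euclidean so its Levi-Civita
connection is flat) satisfies
`α_F(u,v) = φ·Hess(φ⁻¹)(u,v) F + φ⁻¹ dΨ(α_f(u,v)) − ⟨u,v⟩ η`, with
`η = φ w − d(Ψ∘f)(grad φ⁻¹)`. -/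
theorem second_fundamental_form_light_cone_lift (n N : ℕ)
    (w p0 : EuclideanSpace ℝ (Fin (N + 2)))
    (A : EuclideanSpace ℝ (Fin N) →ₗ[ℝ] EuclideanSpace ℝ (Fin (N + 2)))
    (hw : minkL w w = 0) (hp0 : minkL p0 p0 = 0) (hp0w : minkL p0 w = 1)
    (hA : ∀ x y, minkL (A x) (A y) = ⟪x, y⟫)
    (hAp0 : ∀ x, minkL (A x) p0 = 0) (hAw : ∀ x, minkL (A x) w = 0)
    (f : EuclideanSpace ℝ (Fin n) → EuclideanSpace ℝ (Fin N))
    (φ : EuclideanSpace ℝ (Fin n) → ℝ)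
    (αf : EuclideanSpace ℝ (Fin n) → EuclideanSpace ℝ (Fin n) →
      EuclideanSpace ℝ (Fin n) → EuclideanSpace ℝ (Fin N))
    (hf : ContDiff ℝ (⊤ : ℕ∞) f) (hφ : ContDiff ℝ (⊤ : ℕ∞) φ) (hφpos : ∀ x, 0 < φ x)
    (hconf : ∀ x u v, ⟪fderiv ℝ f x u, fderiv ℝ f x v⟫ = (φ x) ^ 2 * ⟪u, v⟫)
    (hαf_normal : ∀ x u v z, ⟪αf x u v, fderiv ℝ f x z⟫ = 0)
    (hαf_tangent : ∀ x u v,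
      fderiv ℝ (fun y => fderiv ℝ f y u) x v - αf x u v ∈ Set.range (fderiv ℝ f x)) :
    ∀ (Ψ : EuclideanSpace ℝ (Fin N) → EuclideanSpace ℝ (Fin (N + 2)))
      (F η : EuclideanSpace ℝ (Fin n) → EuclideanSpace ℝ (Fin (N + 2))),
      (Ψ = fun y => p0 + A y - (‖y‖ ^ 2 / 2) • w) →
      (F = fun x => (φ x)⁻¹ • Ψ (f x)) →
      (η = fun x => φ x • w
          - fderiv ℝ (fun y => Ψ (f y)) x (gradient (fun y => (φ y)⁻¹) x)) →
      ∀ x u v,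
        fderiv ℝ (fun y => fderiv ℝ F y u) x v
          = (φ x * fderiv ℝ (fun y => fderiv ℝ (fun z => (φ z)⁻¹) y u) x v) • F x
            + (φ x)⁻¹ • fderiv ℝ Ψ (f x) (αf x u v)
            - ⟪u, v⟫ • η x := by
  intro Ψ F η hΨ hF hη x u v
  have hp : φ x ≠ 0 := (hφpos x).ne'
  set g : EuclideanSpace ℝ (Fin n) → ℝ := fun y => (φ y)⁻¹ with hgdef
  have hg : ContDiff ℝ (⊤ : ℕ∞) g := hφ.inv (fun y => (hφpos y).ne')
  have hfd : ∀ y, HasFDerivAt f (fderiv ℝ f y) y :=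
    fun y => (hf.differentiable (by simp) y).hasFDerivAt
  have hφd : ∀ y, HasFDerivAt φ (fderiv ℝ φ y) y :=
    fun y => (hφ.differentiable (by simp) y).hasFDerivAt
  have hgd : ∀ y, HasFDerivAt g (fderiv ℝ g y) y :=
    fun y => (hg.differentiable (by simp) y).hasFDerivAt
  set Ac : EuclideanSpace ℝ (Fin N) →L[ℝ] EuclideanSpace ℝ (Fin (N + 2)) :=
    LinearMap.toContinuousLinearMap A with hAcdef
  set DΨ : EuclideanSpace ℝ (Fin N) →
      (EuclideanSpace ℝ (Fin N) →L[ℝ] EuclideanSpace ℝ (Fin (N + 2))) :=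
    fun z => Ac - (innerSL ℝ z).smulRight w with hDΨdef
  have hDΨapp : ∀ z h, DΨ z h = Ac h - ⟪z, h⟫ • w := by
    intro z h
    simp [hDΨdef]
  have hΨd : ∀ z, HasFDerivAt Ψ (DΨ z) z := by
    intro z
    rw [hΨ]
    have h1 : HasFDerivAt (fun y : EuclideanSpace ℝ (Fin N) => p0 + Ac y) Ac z := by
      exact ((hasFDerivAt_const p0 z).add Ac.hasFDerivAt).congr_fderiv (zero_add _)
    have hi := (hasFDerivAt_id z).inner ℝ (hasFDerivAt_id z)
    have hi2 := hi.mul_const (2⁻¹ : ℝ)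
    have hq : HasFDerivAt (fun y : EuclideanSpace ℝ (Fin N) => ‖y‖ ^ 2 / 2)
        ((2⁻¹ : ℝ) • ((fderivInnerCLM ℝ ((id z : EuclideanSpace ℝ (Fin N)), (id z : EuclideanSpace ℝ (Fin N)))).comp
          ((ContinuousLinearMap.id ℝ _).prod (ContinuousLinearMap.id ℝ _)))) z := by
      refine hi2.congr_of_eventuallyEq (Filter.Eventually.of_forall fun y => ?_)
      show ‖y‖ ^ 2 / 2 = ⟪y, y⟫ * 2⁻¹
      rw [real_inner_self_eq_norm_sq]
      ring
    have h2 := hq.smul (hasFDerivAt_const w z)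
    have h3 := h1.sub h2
    have h4 : (fun y : EuclideanSpace ℝ (Fin N) => p0 + Ac y - (‖y‖ ^ 2 / 2) • w)
        = fun y => p0 + A y - (‖y‖ ^ 2 / 2) • w := by
      funext y
      simp [hAcdef]
    change HasFDerivAt (fun y : EuclideanSpace ℝ (Fin N) => p0 + Ac y - (‖y‖ ^ 2 / 2) • w) _ z at h3
    rw [h4] at h3
    refine h3.congr_fderiv (Eq.symm ?_)
    refine ContinuousLinearMap.ext fun h => ?_
    simp only [hDΨdef, ContinuousLinearMap.coe_sub', Pi.sub_apply,
      ContinuousLinearMap.smulRight_apply, innerSL_apply_apply, ContinuousLinearMap.add_apply,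
      ContinuousLinearMap.coe_smul', Pi.smul_apply, ContinuousLinearMap.comp_apply,
      ContinuousLinearMap.prod_apply, ContinuousLinearMap.coe_id', id_eq,
      fderivInnerCLM_apply, ContinuousLinearMap.zero_apply, smul_eq_mul]
    rw [real_inner_comm h z]
    module
  have hΦd : ∀ y, HasFDerivAt (fun y => Ψ (f y)) ((DΨ (f y)).comp (fderiv ℝ f y)) y :=
    fun y => (hΨd (f y)).comp y (hfd y)
  have hFd : ∀ y, HasFDerivAt F
      (g y • (DΨ (f y)).comp (fderiv ℝ f y) + (fderiv ℝ g y).smulRight (Ψ (f y))) y := by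
    intro y
    rw [hF]
    exact (hgd y).smul (hΦd y)
  have hfun : (fun y => fderiv ℝ F y u)
      = fun y => g y • (Ac (fderiv ℝ f y u) - ⟪f y, fderiv ℝ f y u⟫ • w)
          + (fderiv ℝ g y u) • Ψ (f y) := by
    funext y
    rw [(hFd y).fderiv]
    simp [hDΨapp]
  have hf' : ContDiff ℝ (⊤ : ℕ∞) (fderiv ℝ f) := hf.fderiv_right (by simp)
  have hg' : ContDiff ℝ (⊤ : ℕ∞) (fderiv ℝ g) := hg.fderiv_right (by simp)
  have hfu : ContDiff ℝ (⊤ : ℕ∞) (fun y => fderiv ℝ f y u) :=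
    (ContinuousLinearMap.apply ℝ (EuclideanSpace ℝ (Fin N)) u).contDiff.comp hf'
  have hgu : ContDiff ℝ (⊤ : ℕ∞) (fun y => fderiv ℝ g y u) :=
    (ContinuousLinearMap.apply ℝ ℝ u).contDiff.comp hg'
  have hfud : HasFDerivAt (fun y => fderiv ℝ f y u)
      (fderiv ℝ (fun y => fderiv ℝ f y u) x) x := (hfu.differentiable (by simp) x).hasFDerivAt
  have hgud : HasFDerivAt (fun y => fderiv ℝ g y u)
      (fderiv ℝ (fun y => fderiv ℝ g y u) x) x := (hgu.differentiable (by simp) x).hasFDerivAt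
  have t1 : HasFDerivAt (fun y => Ac (fderiv ℝ f y u))
      (Ac.comp (fderiv ℝ (fun y => fderiv ℝ f y u) x)) x := Ac.hasFDerivAt.comp x hfud
  have t2 := (hfd x).inner ℝ hfud
  have t3 := t2.smul (hasFDerivAt_const w x)
  have t4 := t1.sub t3
  have t5 := (hgd x).smul t4
  have t6 := hgud.smul (hΦd x)
  have t7 := t5.add t6
  change HasFDerivAt (fun y => g y • (Ac (fderiv ℝ f y u) - ⟪f y, fderiv ℝ f y u⟫ • w)
      + (fderiv ℝ g y u) • Ψ (f y)) _ x at t7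
  rw [hfun, t7.fderiv]
  simp only [ContinuousLinearMap.add_apply, ContinuousLinearMap.coe_smul', Pi.smul_apply, Pi.smul_apply',
    ContinuousLinearMap.comp_apply, ContinuousLinearMap.smulRight_apply,
    ContinuousLinearMap.coe_sub', Pi.sub_apply, ContinuousLinearMap.prod_apply,
    ContinuousLinearMap.zero_apply, fderivInnerCLM_apply, smul_eq_mul,
    ContinuousLinearMap.coe_id', id_eq]
  have htang := tang_formula f φ αf hf hφ hφpos hconf hαf_normal hαf_tangent x u v
  have hprod : ∀ a, fderiv ℝ φ x a = -((φ x) ^ 2) * fderiv ℝ g x a := by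
    intro a
    have h1 : HasFDerivAt (fun y => φ y * g y) (φ x • fderiv ℝ g x + g x • fderiv ℝ φ x) x :=
      (hφd x).mul (hgd x)
    have h3 : (fun y => φ y * g y) = fun _ : EuclideanSpace ℝ (Fin n) => (1 : ℝ) :=
      funext fun y => mul_inv_cancel₀ (hφpos y).ne'
    rw [h3] at h1
    have h4 := h1.unique (hasFDerivAt_const 1 x)
    have h5 := congrArg (fun (L : EuclideanSpace ℝ (Fin n) →L[ℝ] ℝ) => L a) h4
    simp only [ContinuousLinearMap.add_apply, ContinuousLinearMap.coe_smul', Pi.smul_apply,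
      ContinuousLinearMap.zero_apply, smul_eq_mul] at h5
    have hgx : g x = (φ x)⁻¹ := rfl
    rw [hgx] at h5
    field_simp at h5
    linear_combination h5
  have hgrad : gradient φ x = (-((φ x) ^ 2)) • gradient g x := by
    refine ext_inner_right ℝ fun z => ?_
    rw [real_inner_smul_left]
    have e1 : ⟪gradient φ x, z⟫ = fderiv ℝ φ x z := InnerProductSpace.toDual_symm_apply
    have e2 : ⟪gradient g x, z⟫ = fderiv ℝ g x z := InnerProductSpace.toDual_symm_apply
    rw [e1, e2, hprod z]
  rw [htang, hgrad, hprod u, hprod v, hconf x v u, real_inner_comm v u]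
  simp only [hF, hη]
  rw [(hΨd (f x)).fderiv, (hΦd x).fderiv]
  have hgx : g x = (φ x)⁻¹ := rfl
  simp only [ContinuousLinearMap.comp_apply, hDΨapp, map_add, map_sub, map_smul,
    ContinuousLinearMap.map_smul, inner_add_right, inner_sub_right, real_inner_smul_right,
    smul_eq_mul, hgx, smul_zero, zero_add]
  match_scalars <;> field_simp
  all_goals (try ring)
  all_goals (try (left; ring))
  all_goals (try (left; trivial))
end
end

section
/- Let F : M^n → V^{N+1} ⊂ L^{N+2} be an isometric immersion into the light cone, L ⊂ M a connected submanifold, and ξ a vector field along L with values in L^{N+2} such that dξ(X) = ω(X) F for a 1-form ω on L, for all X tangent to L with dim L ≥ 2. If at each point F, dF(X), dF(Y) are linearly independent for linearly independent tangent X, Y, then ω = 0 and ξ is constant along L. -/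
open scoped RealInnerProductSpace

noncomputable section

/-- if `F` maps a connected domain of dimension `≥ 2` to the light cone,
`ξ` is a vector field along it with `dξ(X) = ω(X) F` for a 1-form `ω`, and at each
point `F, dF(X), dF(Y)` are linearly independent for linearly independent `X, Y`,
then `ω = 0` and `ξ` is constant. -/
theorem one_form_vanishes_and_xi_constant
    (E : Type*) [NormedAddCommGroup E] [NormedSpace ℝ E] [FiniteDimensional ℝ E]
    (hdim : 2 ≤ Module.finrank ℝ E) (N : ℕ)
    (F ξ : E → EuclideanSpace ℝ (Fin (N + 2)))
    (ω : E → E →L[ℝ] ℝ)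
    (hF : ContDiff ℝ (⊤ : ℕ∞) F) (hξ : ContDiff ℝ (⊤ : ℕ∞) ξ)
    (hcone : ∀ x, minkL (F x) (F x) = 0)
    (hdξ : ∀ x u, fderiv ℝ ξ x u = ω x u • F x)
    (hindep : ∀ x u v, LinearIndependent ℝ ![u, v] →
      LinearIndependent ℝ ![F x, fderiv ℝ F x u, fderiv ℝ F x v]) :
    (∀ x u, ω x u = 0) ∧ (∀ x y, ξ x = ξ y) := by
  have hFd : Differentiable ℝ F := hF.differentiable (by simp)
  have hξd : Differentiable ℝ ξ := hξ.differentiable (by simp)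
  have hξ' : ContDiff ℝ (⊤ : ℕ∞) (fderiv ℝ ξ) := hξ.fderiv_right (by simp)
  have hξ'd : Differentiable ℝ (fderiv ℝ ξ) := hξ'.differentiable (by simp)
  -- a fixed linearly independent pair
  obtain ⟨u0, v0, huv0⟩ : ∃ u v : E, LinearIndependent ℝ ![u, v] := by
    have b := Module.finBasis ℝ E
    let f : Fin 2 → Fin (Module.finrank ℝ E) := ![⟨0, by omega⟩, ⟨1, by omega⟩]
    have hf : Function.Injective f := by
      intro a c h
      fin_cases a <;> fin_cases c <;> simp_all [f, Fin.ext_iff]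
    refine ⟨b (f 0), b (f 1), ?_⟩
    have : ![b (f 0), b (f 1)] = b ∘ f := by
      funext i; fin_cases i <;> rfl
    rw [this]
    exact b.linearIndependent.comp f hf
  -- F is nonvanishing
  have Fnz : ∀ y, F y ≠ 0 := fun y => by
    have := (hindep y u0 v0 huv0).ne_zero 0
    simpa using this
  -- the scalar function equal to ω · u
  set c : E → E → ℝ := fun u y => ⟪F y, fderiv ℝ ξ y u⟫ / ⟪F y, F y⟫ with hc
  have hFF : ∀ y, ⟪F y, F y⟫ ≠ 0 := fun y h =>
    Fnz y (inner_self_eq_zero.mp h)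
  have hcval : ∀ u y, c u y = ω y u := by
    intro u y
    rw [hc]
    simp only [hdξ y u, real_inner_smul_right]
    exact mul_div_cancel_right₀ _ (hFF y)
  have hcdiff : ∀ u y, DifferentiableAt ℝ (c u) y := by
    intro u y
    show DifferentiableAt ℝ (fun z => ⟪F z, fderiv ℝ ξ z u⟫ / ⟪F z, F z⟫) y
    simp only [div_eq_mul_inv]
    have h1 : DifferentiableAt ℝ (fun z => fderiv ℝ ξ z u) y :=
      (hξ'd y).clm_apply (differentiableAt_const u)
    have h2 : DifferentiableAt ℝ (fun z => ⟪F z, fderiv ℝ ξ z u⟫) y := (hFd y).inner ℝ h1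
    have h3 : DifferentiableAt ℝ (fun z => ⟪F z, F z⟫) y := (hFd y).inner ℝ (hFd y)
    exact h2.mul (h3.inv (hFF y))
  -- key step: ω vanishes on any vector of a linearly independent pair
  have key : ∀ x u v, LinearIndependent ℝ ![u, v] → ω x u = 0 := by
    intro x u v hLI
    have hd2 := (hξ'd x).hasFDerivAt
    set A := fderiv ℝ (fderiv ℝ ξ) x with hA
    have hsymm : ∀ a b : E, A a b = A b a :=
      second_derivative_symmetric (fun y => (hξd y).hasFDerivAt) hd2
    -- derivative of y ↦ fderiv ξ y w, two ways
    have hway1 : ∀ w : E, HasFDerivAt (fun y => fderiv ℝ ξ y w)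
        ((fderiv ℝ ξ x).comp (0 : E →L[ℝ] E) + A.flip w) x :=
      fun w => hd2.clm_apply (hasFDerivAt_const w x)
    have hway2 : ∀ w : E, HasFDerivAt (fun y => fderiv ℝ ξ y w)
        (c w x • fderiv ℝ F x + (fderiv ℝ (c w) x).smulRight (F x)) x := by
      intro w
      have h1 : HasFDerivAt (fun y => c w y • F y)
          (c w x • fderiv ℝ F x + (fderiv ℝ (c w) x).smulRight (F x)) x :=
        (hcdiff w x).hasFDerivAt.smul (hFd x).hasFDerivAt
      have h2 : (fun y => c w y • F y) = fun y => fderiv ℝ ξ y w := by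
        funext y; rw [hcval w y, hdξ y w]
      rwa [h2] at h1
    have heval : ∀ a b : E,
        A a b = fderiv ℝ (c b) x a • F x + ω x b • fderiv ℝ F x a := by
      intro a b
      have := ((hway1 b).unique (hway2 b))
      have h3 := congrArg (fun (T : E →L[ℝ] EuclideanSpace ℝ (Fin (N + 2))) => T a) this
      simp only [ContinuousLinearMap.add_apply, ContinuousLinearMap.comp_apply,
        ContinuousLinearMap.zero_apply, ContinuousLinearMap.flip_apply,
        ContinuousLinearMap.smul_apply, ContinuousLinearMap.smulRight_apply,
        map_zero, zero_add, hcval b x] at h3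
      rw [h3]; module
    have heq : fderiv ℝ (c u) x v • F x + ω x u • fderiv ℝ F x v
        = fderiv ℝ (c v) x u • F x + ω x v • fderiv ℝ F x u := by
      rw [← heval v u, ← heval u v, hsymm]
    have hzero : ∑ i : Fin 3,
        (![fderiv ℝ (c u) x v - fderiv ℝ (c v) x u, -(ω x v), ω x u] i) •
          (![F x, fderiv ℝ F x u, fderiv ℝ F x v] i) = 0 := by
      simp only [Fin.sum_univ_three, Matrix.cons_val_zero, Matrix.cons_val_one,
        Matrix.head_cons, Matrix.cons_val_two, Matrix.tail_cons]
      have h4 : fderiv ℝ (c u) x v • F x + ω x u • fderiv ℝ F x v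
          - (fderiv ℝ (c v) x u • F x + ω x v • fderiv ℝ F x u) = 0 := by
        rw [heq]; abel
      rw [← h4]; module
    have := Fintype.linearIndependent_iff.mp (hindep x u v hLI)
      (![fderiv ℝ (c u) x v - fderiv ℝ (c v) x u, -(ω x v), ω x u]) hzero 2
    simpa using this
  have hω : ∀ x u, ω x u = 0 := by
    intro x u
    by_cases hu : u = 0
    · simp [hu]
    · -- find v making u, v linearly independent
      by_cases h : ∀ v : E, v ∈ Submodule.span ℝ {u}
      · exfalso
        have htop : Submodule.span ℝ {u} = ⊤ := by
          rw [Submodule.eq_top_iff']; exact h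
        have h1 : Module.finrank ℝ E = 1 := by
          have := finrank_span_singleton (K := ℝ) hu
          rwa [htop, finrank_top] at this
        omega
      · push_neg at h
        obtain ⟨v, hv⟩ := h
        refine key x u v (LinearIndependent.pair_iff.mpr fun s t hst => ?_)
        have ht : t = 0 := by
          by_contra ht
          apply hv
          rw [Submodule.mem_span_singleton]
          refine ⟨-(s / t), ?_⟩
          have : t • v = -(s • u) := by
            rw [add_comm] at hst; exact eq_neg_of_add_eq_zero_left hst
          have h5 : v = t⁻¹ • -(s • u) := by
            rw [← this, smul_smul, inv_mul_cancel₀ ht, one_smul]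
          rw [h5]
          rw [smul_neg, smul_smul]
          rw [neg_smul, div_eq_inv_mul]
        subst ht
        simp only [zero_smul, add_zero, smul_eq_zero] at hst
        exact ⟨hst.resolve_right hu, rfl⟩
  refine ⟨hω, ?_⟩
  intro x y
  apply is_const_of_fderiv_eq_zero hξd
  intro z
  ext w
  simp [hdξ z w, hω z w]
end
end

section
/- Let S be a Codazzi tensor on a Riemannian manifold M and λ a smooth eigenvalue function of S such that the eigenbundle E_λ = ker(λI - S) has constant rank k ≥ 2. Then λ is constant along E_λ, i.e., X(λ) = 0 for every X ∈ E_λ. -/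
open scoped RealInnerProductSpace

noncomputable section

private lemma isUnit_of_injective {H : Type*} [NormedAddCommGroup H]
    [InnerProductSpace ℝ H] [FiniteDimensional ℝ H]
    (f : H →L[ℝ] H) (hf : Function.Injective f) : IsUnit f := by
  have : Function.Bijective (f : H →ₗ[ℝ] H) :=
    ⟨hf, (LinearMap.injective_iff_surjective).mp hf⟩
  exact ((LinearEquiv.ofBijective (f : H →ₗ[ℝ] H) this).toContinuousLinearEquiv.toUnit).isUnit

private lemma injective_of_isUnit {H : Type*} [NormedAddCommGroup H]
    [InnerProductSpace ℝ H] [FiniteDimensional ℝ H]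
    {f : H →L[ℝ] H} (hf : IsUnit f) : Function.Injective f := by
  intro a b hab
  have h1 : (↑hf.unit⁻¹ * ↑hf.unit : H →L[ℝ] H) a = (↑hf.unit⁻¹ * ↑hf.unit : H →L[ℝ] H) b := by
    simp only [ContinuousLinearMap.mul_apply]
    rw [hf.unit_spec, hab]
  simpa using h1

theorem aux_codazzi {H : Type*} [NormedAddCommGroup H] [InnerProductSpace ℝ H]
    [FiniteDimensional ℝ H]
    (S : H → (H →L[ℝ] H)) (lam : H → ℝ) (k : ℕ) (hk : 2 ≤ k)
    (hS : ContDiff ℝ (⊤ : ℕ∞) fun x => S x) (hlam : ContDiff ℝ (⊤ : ℕ∞) lam)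
    (hsymm : ∀ x u v, ⟪S x u, v⟫ = ⟪u, S x v⟫)
    (hcodazzi : ∀ x u v, fderiv ℝ (fun y => S y v) x u = fderiv ℝ (fun y => S y u) x v)
    (hrank : ∀ x, Module.finrank ℝ
      (LinearMap.ker (lam x • (LinearMap.id : H →ₗ[ℝ] H) - (S x : H →ₗ[ℝ] H))) = k) :
    ∀ x u, u ∈ LinearMap.ker (lam x • (LinearMap.id : H →ₗ[ℝ] H) - (S x : H →ₗ[ℝ] H)) →
      fderiv ℝ lam x u = 0 := by
  -- the continuous-linear-map version of `λ·id - S`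
  set T : H → (H →L[ℝ] H) := fun y => lam y • ContinuousLinearMap.id ℝ H - S y with hTdef
  have hTapp : ∀ y w, T y w = lam y • w - S y w := by
    intro y w; simp [hTdef]
  have hTlin : ∀ y, ((T y : H →ₗ[ℝ] H)) = lam y • LinearMap.id - (S y : H →ₗ[ℝ] H) := by
    intro y; ext w; simp [hTdef]
  have hmem : ∀ y w,
      (w ∈ LinearMap.ker (lam y • (LinearMap.id : H →ₗ[ℝ] H) - (S y : H →ₗ[ℝ] H)))
        ↔ T y w = 0 := by
    intro y w
    rw [LinearMap.mem_ker, ← hTlin]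
    simp
  have hrank' : ∀ y, Module.finrank ℝ (LinearMap.ker (T y : H →ₗ[ℝ] H)) = k := by
    intro y; rw [hTlin]; exact hrank y
  have hTcont : ContDiff ℝ (⊤ : ℕ∞) T := (hlam.smul contDiff_const).sub hS
  have hTsymm : ∀ y w z, ⟪T y w, z⟫ = ⟪w, T y z⟫ := by
    intro y w z
    rw [hTapp, hTapp, inner_sub_left, inner_sub_right, real_inner_smul_left,
      real_inner_smul_right, hsymm]
  intro x₀ u hu
  have hu0 : T x₀ u = 0 := (hmem x₀ u).mp hu
  by_cases hu' : u = 0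
  · simp [hu']
  -- the eigenspace at x₀
  set E : Submodule ℝ H := LinearMap.ker (T x₀ : H →ₗ[ℝ] H) with hEdef
  have hEmem : ∀ w, w ∈ E ↔ T x₀ w = 0 := fun w => LinearMap.mem_ker
  have huE : u ∈ E := (hEmem u).mpr hu0
  have hErank : Module.finrank ℝ E = k := hrank' x₀
  -- choose `v ∈ E` orthogonal to `u`, nonzero
  obtain ⟨v, hvE, hv0, huv⟩ : ∃ v, v ∈ E ∧ v ≠ 0 ∧ ⟪u, v⟫ = 0 := by
    set φ : E →ₗ[ℝ] ℝ := ((innerSL ℝ u : H →L[ℝ] ℝ) : H →ₗ[ℝ] ℝ).comp E.subtype with hφdef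
    have h1 : Module.finrank ℝ (LinearMap.ker φ) + Module.finrank ℝ (LinearMap.range φ) = k := by
      rw [← hErank, add_comm]
      exact LinearMap.finrank_range_add_finrank_ker φ
    have h2 : Module.finrank ℝ (LinearMap.range φ) ≤ 1 := by
      have := Submodule.finrank_le (LinearMap.range φ)
      simpa using this
    have h3 : LinearMap.ker φ ≠ ⊥ := by
      intro h
      rw [h] at h1
      simp only [finrank_bot, zero_add] at h1
      omega
    obtain ⟨z, hz, hz0⟩ := Submodule.exists_mem_ne_zero_of_ne_bot h3
    refine ⟨↑z, z.2, ?_, ?_⟩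
    · intro h
      exact hz0 (Subtype.ext h)
    · have : φ z = 0 := hz
      simpa [hφdef] using this
  have hvT : T x₀ v = 0 := (hEmem v).mp hvE
  -- the orthogonal projection onto E as a map H →L H
  set P : H →L[ℝ] H := E.subtypeL.comp (Submodule.orthogonalProjectionOnto E) with hPdef
  have hPmem : ∀ w, P w ∈ E := fun w => (Submodule.orthogonalProjectionOnto E w).2
  have hPid : ∀ w ∈ E, P w = w := by
    intro w hw; exact Submodule.starProjection_eq_self_iff.mpr hw
  -- range of T x₀ is orthogonal to E
  have hrangeOrth : ∀ w, T x₀ w ∈ Eᗮ := by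
    intro w
    rw [Submodule.mem_orthogonal]
    intro e he
    rw [← hTsymm, (hEmem e).mp he, inner_zero_left]
  -- the perturbed operator `A y = T y + P`
  set A : H → (H →L[ℝ] H) := fun y => T y + P with hAdef
  have hAcont : ContDiff ℝ (⊤ : ℕ∞) A := hTcont.add contDiff_const
  have hAapp : ∀ y w, A y w = T y w + P w := fun y w => rfl
  have hAunit : IsUnit (A x₀) := by
    apply isUnit_of_injective
    have hker : ∀ w, A x₀ w = 0 → w = 0 := by
      intro w hw
      have hw' : T x₀ w + P w = 0 := hw
      have h1 : ⟪T x₀ w, P w⟫ = 0 := by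
        rw [real_inner_comm]
        exact (Submodule.mem_orthogonal _ _).mp (hrangeOrth w) _ (hPmem w)
      have h2 : ⟪T x₀ w + P w, P w⟫ = 0 := by rw [hw']; simp
      rw [inner_add_left, h1, zero_add] at h2
      have hPw : P w = 0 := inner_self_eq_zero.mp h2
      have hTw : T x₀ w = 0 := by rw [hPw, add_zero] at hw'; exact hw'
      have hwE : w ∈ E := (hEmem w).mpr hTw
      rw [← hPid w hwE, hPw]
    intro a b hab
    have := hker (a - b) (by rw [map_sub, hab, sub_self])
    exact sub_eq_zero.mp this
  -- the (eventually defined) eigenvector fields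
  set N : H → (H →L[ℝ] H) := fun y => Ring.inverse (A y) with hNdef
  have hNdiff : ContDiffAt ℝ (⊤ : ℕ∞) N x₀ := by
    have h1 : ContDiffAt ℝ (⊤ : ℕ∞) (Ring.inverse : (H →L[ℝ] H) → (H →L[ℝ] H)) (A x₀) := by
      have := contDiffAt_ringInverse ℝ (n := (⊤ : ℕ∞)) hAunit.unit
      rwa [hAunit.unit_spec] at this
    exact h1.comp x₀ hAcont.contDiffAt
  have hAev : ∀ᶠ y in nhds x₀, IsUnit (A y) := by
    filter_upwards [hAcont.continuous.continuousAt.eventually_mem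
      (Units.isOpen.mem_nhds hAunit)] with y hy
    exact hy
  -- the compressed operator on F = Eᗮ
  set F : Submodule ℝ H := Eᗮ with hFdef
  set B : H → (F →L[ℝ] F) :=
    fun y => (Submodule.orthogonalProjectionOnto F).comp ((T y).comp F.subtypeL) with hBdef
  have hBunit : IsUnit (B x₀) := by
    apply isUnit_of_injective
    have hker : ∀ z : F, B x₀ z = 0 → z = 0 := by
      intro z hz
      have h1 : Submodule.orthogonalProjectionOnto F (T x₀ ↑z) = 0 := hz
      have h2 : T x₀ ↑z ∈ F := hrangeOrth ↑z
      have h3 : T x₀ ↑z = 0 := by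
        have : ((Submodule.orthogonalProjectionOnto F (T x₀ ↑z) : F) : H) = T x₀ ↑z :=
          Submodule.starProjection_eq_self_iff.mpr h2
        rw [h1] at this
        simpa using this.symm
      have h4 : (z : H) ∈ E := (hEmem _).mpr h3
      have h5 : (z : H) ∈ Eᗮ := z.2
      have : (z : H) = 0 :=
        inner_self_eq_zero.mp ((Submodule.mem_orthogonal _ _).mp h5 _ h4)
      exact Subtype.ext this
    intro a b hab
    have := hker (a - b) (by rw [map_sub, hab, sub_self])
    exact sub_eq_zero.mp this
  have hBcont : Continuous B :=
    continuous_const.clm_comp (hTcont.continuous.clm_comp continuous_const)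
  have hBev : ∀ᶠ y in nhds x₀, IsUnit (B y) := by
    filter_upwards [hBcont.continuousAt.eventually_mem
      ((Units.isOpen (R := F →L[ℝ] F)).mem_nhds hBunit)] with y hy
    exact hy
  -- the key eventual eigen-equation
  have hkey : ∀ᶠ y in nhds x₀, ∀ w ∈ E, T y (N y w) = 0 := by
    filter_upwards [hAev, hBev] with y hAy hBy
    intro w hw
    have h1 : A y (N y w) = w := by
      have hmul := Ring.mul_inverse_cancel _ hAy
      calc A y (N y w) = (A y * N y) w := rfl
        _ = w := by rw [hNdef, hmul]; rfl
    have hTeq : T y (N y w) = w - P (N y w) := by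
      have h2 := hAapp y (N y w)
      rw [h1] at h2
      exact eq_sub_of_add_eq h2.symm
    have hTE : T y (N y w) ∈ E := by
      rw [hTeq]
      exact Submodule.sub_mem E hw (hPmem _)
    -- injectivity of `T y` on F relative to E
    have hinj : ∀ z : F, T y ↑z ∈ E → (z : H) = 0 := by
      intro z hz
      have hBz : B y z = 0 := by
        have h3 : Submodule.orthogonalProjectionOnto F (T y ↑z) = 0 := by
          rw [Submodule.orthogonalProjectionOnto_eq_zero_iff]
          exact (Submodule.le_orthogonal_orthogonal E) hz
        exact h3
      have := injective_of_isUnit hBy (show B y z = B y 0 by simpa using hBz)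
      exact congrArg Subtype.val this
    -- dimension count: the range of `T y` is the image of `F`
    have hFrank : Module.finrank ℝ F + k = Module.finrank ℝ H := by
      have h4 := Submodule.finrank_add_finrank_orthogonal (K := E)
      rw [hErank, ← hFdef] at h4
      omega
    have hginj : Function.Injective ((T y : H →ₗ[ℝ] H).comp F.subtype) := by
      intro a b hab
      have h5 : (T y : H →ₗ[ℝ] H).comp F.subtype (a - b) = 0 := by
        rw [map_sub, hab, sub_self]
      have h6 : T y ((a - b : F) : H) = 0 := h5
      have h7 : ((a - b : F) : H) = 0 := hinj _ (by rw [h6]; exact Submodule.zero_mem E)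
      have h8 : (a - b : F) = 0 := by
        apply Subtype.ext
        simpa using h7
      rwa [sub_eq_zero] at h8
    have hrangeF : Submodule.map (T y : H →ₗ[ℝ] H) F = LinearMap.range (T y : H →ₗ[ℝ] H) := by
      apply Submodule.eq_of_le_of_finrank_le (LinearMap.map_le_range)
      have h8 : Module.finrank ℝ (Submodule.map (T y : H →ₗ[ℝ] H) F)
          = Module.finrank ℝ F := by
        have h8a := LinearMap.finrank_range_of_inj hginj
        rwa [LinearMap.range_comp, Submodule.range_subtype] at h8a
      have h9 : Module.finrank ℝ (LinearMap.range (T y : H →ₗ[ℝ] H)) + k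
          = Module.finrank ℝ H := by
        have := LinearMap.finrank_range_add_finrank_ker (T y : H →ₗ[ℝ] H)
        rw [hrank' y] at this
        exact this
      omega
    have hmemrange : T y (N y w) ∈ LinearMap.range (T y : H →ₗ[ℝ] H) := ⟨N y w, rfl⟩
    rw [← hrangeF] at hmemrange
    obtain ⟨z, hzF, hz⟩ := hmemrange
    have hz0 : z = 0 := by
      apply hinj ⟨z, hzF⟩
      show T y z ∈ E
      have hz' : T y z = T y (N y w) := hz
      rw [hz']
      exact hTE
    have hz'' : T y (N y w) = T y z := hz.symm
    rw [hz'', hz0, map_zero]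
  -- differentiability of the eigenvector fields
  have hNwdiff : ∀ w : H, ContDiffAt ℝ (⊤ : ℕ∞) (fun y => N y w) x₀ := fun w =>
    hNdiff.clm_apply contDiffAt_const
  have hNx : ∀ w ∈ E, N x₀ w = w := by
    intro w hw
    have hAw : A x₀ w = w := by
      rw [hAapp, (hEmem w).mp hw, hPid w hw, zero_add]
    have hmul := Ring.inverse_mul_cancel _ hAunit
    calc N x₀ w = N x₀ (A x₀ w) := by rw [hAw]
      _ = (N x₀ * A x₀) w := rfl
      _ = w := by rw [hNdef, hmul]; rfl
  -- derivatives
  have hlamd : HasFDerivAt lam (fderiv ℝ lam x₀) x₀ :=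
    ((hlam.differentiable (by simp)) x₀).hasFDerivAt
  have hSd : HasFDerivAt S (fderiv ℝ S x₀) x₀ :=
    ((hS.differentiable (by simp)) x₀).hasFDerivAt
  have hTd : HasFDerivAt T (fderiv ℝ T x₀) x₀ :=
    ((hTcont.differentiable (by simp)) x₀).hasFDerivAt
  -- identify the derivative of T, applied to vectors
  have hT2 : HasFDerivAt T
      (((fderiv ℝ lam x₀).smulRight (ContinuousLinearMap.id ℝ H)) - fderiv ℝ S x₀) x₀ := by
    rw [hTdef]
    exact (hlamd.smul_const _).sub hSd
  have hSapp : ∀ d w, (fderiv ℝ S x₀ d) w = fderiv ℝ (fun y => S y w) x₀ d := by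
    intro d w
    have h1 := fderiv_clm_apply (c := S) (u := fun _ => w)
      ((hS.differentiable (by simp)) x₀) (differentiableAt_const w)
    rw [h1]
    simp
  have hTder : ∀ d w, (fderiv ℝ T x₀ d) w
      = (fderiv ℝ lam x₀ d) • w - fderiv ℝ (fun y => S y w) x₀ d := by
    intro d w
    rw [hTd.unique hT2]
    simp [ContinuousLinearMap.sub_apply, ContinuousLinearMap.smulRight_apply, hSapp]
  -- main derivative identity: for w ∈ E and any direction d
  have hmain : ∀ w ∈ E, ∀ d : H,
      (fderiv ℝ lam x₀ d) • w - fderiv ℝ (fun y => S y w) x₀ d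
        + T x₀ ((fderiv ℝ (fun y => N y w) x₀) d) = 0 := by
    intro w hw d
    have hNw : HasFDerivAt (fun y => N y w) (fderiv ℝ (fun y => N y w) x₀) x₀ :=
      (((hNwdiff w).differentiableAt (by simp))).hasFDerivAt
    have hcomp : HasFDerivAt (fun y => T y (N y w))
        ((T x₀).comp (fderiv ℝ (fun y => N y w) x₀)
          + (fderiv ℝ T x₀).flip (N x₀ w)) x₀ := hTd.clm_apply hNw
    have hzero : fderiv ℝ (fun y => T y (N y w)) x₀ = 0 := by
      have hev : (fun y => T y (N y w)) =ᶠ[nhds x₀] fun _ => (0 : H) := by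
        filter_upwards [hkey] with y hy
        exact hy w hw
      rw [hev.fderiv_eq]
      exact fderiv_const_apply 0
    have h2 : ((T x₀).comp (fderiv ℝ (fun y => N y w) x₀)
          + (fderiv ℝ T x₀).flip (N x₀ w)) = 0 := by
      rw [← hcomp.fderiv]
      exact hzero
    have h3 := congrArg (fun (f : H →L[ℝ] H) => f d) h2
    simp only [ContinuousLinearMap.add_apply, ContinuousLinearMap.comp_apply,
      ContinuousLinearMap.flip_apply, ContinuousLinearMap.zero_apply] at h3
    rw [hNx w hw, hTder] at h3
    linear_combination (norm := module) h3
  -- apply with (w,d) = (v,u) and (u,v), subtract, use Codazzi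
  have hEv := hmain v hvE u
  have hEu := hmain u huE v
  rw [hcodazzi x₀ u v] at hEv
  have hsub : (fderiv ℝ lam x₀ u) • v - (fderiv ℝ lam x₀ v) • u
      + T x₀ ((fderiv ℝ (fun y => N y v) x₀) u - (fderiv ℝ (fun y => N y u) x₀) v) = 0 := by
    rw [map_sub]
    linear_combination (norm := module) hEv - hEu
  -- take the inner product with v
  have hinner := congrArg (fun z => ⟪z, v⟫) hsub
  simp only [inner_add_left, inner_sub_left, real_inner_smul_left, inner_zero_left] at hinner
  rw [hTsymm, hvT, inner_zero_right, huv] at hinner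
  have hvv : ⟪v, v⟫ ≠ 0 := fun h => hv0 (inner_self_eq_zero.mp h)
  have : fderiv ℝ lam x₀ u * ⟪v, v⟫ = 0 := by linarith
  rcases mul_eq_zero.mp this with h | h
  · exact h
  · exact absurd h hvv


/-- Reckziegel: let `S` be a Codazzi tensor (here on a flat Euclidean
domain, where the Levi-Civita connection is the ordinary derivative, so the Codazzi
condition reads `(D_u S)v = (D_v S)u`), and `λ` a smooth eigenvalue function whose
eigenbundle `E_λ = ker(λ·id − S)` has constant rank `k ≥ 2`. Then `λ` is constant
along `E_λ`. -/
theorem codazzi_eigenvalue_constant_along_eigenbundle (n : ℕ)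
    (S : EuclideanSpace ℝ (Fin n) →
      (EuclideanSpace ℝ (Fin n) →L[ℝ] EuclideanSpace ℝ (Fin n)))
    (lam : EuclideanSpace ℝ (Fin n) → ℝ) (k : ℕ) (hk : 2 ≤ k)
    (hS : ContDiff ℝ (⊤ : ℕ∞) fun x => S x) (hlam : ContDiff ℝ (⊤ : ℕ∞) lam)
    (hsymm : ∀ x u v, ⟪S x u, v⟫ = ⟪u, S x v⟫)
    (hcodazzi : ∀ x u v, fderiv ℝ (fun y => S y v) x u = fderiv ℝ (fun y => S y u) x v)
    (hrank : ∀ x, Module.finrank ℝ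
      (LinearMap.ker (lam x • (LinearMap.id : EuclideanSpace ℝ (Fin n) →ₗ[ℝ]
        EuclideanSpace ℝ (Fin n)) - (S x : EuclideanSpace ℝ (Fin n) →ₗ[ℝ]
          EuclideanSpace ℝ (Fin n)))) = k) :
    ∀ x u, u ∈ LinearMap.ker (lam x • (LinearMap.id : EuclideanSpace ℝ (Fin n) →ₗ[ℝ]
        EuclideanSpace ℝ (Fin n)) - (S x : EuclideanSpace ℝ (Fin n) →ₗ[ℝ]
          EuclideanSpace ℝ (Fin n))) →
      fderiv ℝ lam x u = 0 := by
  exact aux_codazzi S lam k hk hS hlam hsymm hcodazzi hrank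
end
end

section
/- Let S be a Codazzi tensor on a Riemannian manifold M with smooth eigenvalue λ whose eigenbundle E_λ = ker(λI - S) has constant rank. Then E_λ is an umbilical distribution with mean curvature normal η satisfying (λI - S)η = (grad λ)_{E_λ^⊥}, where the subscript denotes orthogonal projection onto E_λ^⊥. In particular, if λ is constant along E_λ then E_λ is spherical. -/
open scoped RealInnerProductSpace

noncomputable section

namespace CodazziAux



variable {n : ℕ}

abbrev Euc (n : ℕ) := EuclideanSpace ℝ (Fin n)

section pointwise

variable (T : Euc n →L[ℝ](Euc n)) (hsymm : ∀ u v : Euc n, ⟪T u, v⟫ = ⟪u, T v⟫)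
  (E : Submodule ℝ (Euc n)) (hker : ∀ u : Euc n, u ∈ E ↔ T u = 0)

include hsymm hker

lemma Tperp : ∀ w : Euc n, w ∈ Eᗮ → T w ∈ Eᗮ := by
  intro w hw
  rw [Submodule.mem_orthogonal]
  intro u hu
  rw [← hsymm, (hker u).1 hu, inner_zero_left]

lemma Trange : ∀ w : Euc n, T w ∈ Eᗮ := by
  intro w
  rw [Submodule.mem_orthogonal]
  intro u hu
  rw [← hsymm, (hker u).1 hu, inner_zero_left]

lemma mem_of_T_mem : ∀ w : Euc n, T w ∈ E → w ∈ E := by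
  intro w hTw
  obtain ⟨a, ha, b, hb, rfl⟩ := E.exists_add_mem_mem_orthogonal w
  have hTa : T a = 0 := (hker a).1 ha
  have hTb : T b ∈ Eᗮ := Tperp T hsymm E hker b hb
  have : T (a + b) = T b := by rw [map_add, hTa, zero_add]
  rw [this] at hTw
  have hTb0 : T b = 0 := by
    have := Submodule.mem_inf.2 ⟨hTw, hTb⟩
    rwa [Submodule.inf_orthogonal_eq_bot, Submodule.mem_bot] at this
  have hbE : b ∈ E := (hker b).2 hTb0
  have hb0 : b = 0 := by
    have := Submodule.mem_inf.2 ⟨hbE, hb⟩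
    rwa [Submodule.inf_orthogonal_eq_bot, Submodule.mem_bot] at this
  rw [hb0, add_zero]; exact ha

lemma exists_eta (g : Euc n) : ∃ w : Euc n, w ∈ Eᗮ ∧ T w - g ∈ E := by
  have hmaps : Set.MapsTo T Eᗮ Eᗮ := fun w hw => Tperp T hsymm E hker w hw
  set T' : Eᗮ →ₗ[ℝ] Eᗮ := (T : Euc n →ₗ[ℝ](Euc n)).restrict hmaps with hT'
  have hinj : Function.Injective T' := by
    intro a b hab
    have : T (a : Euc n) - T (b : Euc n) = 0 := by
      have := congrArg (Subtype.val) hab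
      exact sub_eq_zero.2 this
    have h1 : T ((a : Euc n) - (b : Euc n)) = 0 := by rw [map_sub, this]
    have h2 : ((a : Euc n) - (b : Euc n)) ∈ E := (hker _).2 h1
    have h3 : ((a : Euc n) - (b : Euc n)) ∈ Eᗮ := Eᗮ.sub_mem a.2 b.2
    have : (a : Euc n) - (b : Euc n) = 0 := by
      have := Submodule.mem_inf.2 ⟨h2, h3⟩
      rwa [Submodule.inf_orthogonal_eq_bot, Submodule.mem_bot] at this
    exact Subtype.ext (by rwa [sub_eq_zero] at this)
  have hsurj : Function.Surjective T' := (LinearMap.injective_iff_surjective).1 hinj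
  obtain ⟨w, hw⟩ := hsurj (Eᗮ.orthogonalProjectionOnto g)
  refine ⟨(w : Euc n), w.2, ?_⟩
  have hval : T (w : Euc n) = (Eᗮ.orthogonalProjectionOnto g : Euc n) := by
    have := congrArg (Subtype.val) hw
    exact this
  rw [hval]
  have : g - (Eᗮ.orthogonalProjectionOnto g : Euc n) ∈ Eᗮᗮ :=
    Submodule.sub_starProjection_mem_orthogonal (K := Eᗮ) g
  rw [Submodule.orthogonal_orthogonal] at this
  have := E.neg_mem this
  simpa [neg_sub] using this

lemma eta_unique (g : Euc n) (w w' : Euc n) (h1 : w ∈ Eᗮ) (h2 : T w - g ∈ E)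
    (h1' : w' ∈ Eᗮ) (h2' : T w' - g ∈ E) : w = w' := by
  have hE1 : T (w - w') ∈ E := by
    have := E.sub_mem h2 h2'
    simpa [map_sub, sub_sub_sub_cancel_right] using this
  have hE2 : w - w' ∈ Eᗮ := Eᗮ.sub_mem h1 h1'
  have hmem : w - w' ∈ E := mem_of_T_mem T hsymm E hker _ hE1
  have : w - w' = 0 := by
    have := Submodule.mem_inf.2 ⟨hmem, hE2⟩
    rwa [Submodule.inf_orthogonal_eq_bot, Submodule.mem_bot] at this
  rwa [sub_eq_zero] at this

end pointwise



variable {n : ℕ}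

lemma inner_gradient (f : Euc n → ℝ) (x v : Euc n) :
    ⟪gradient f x, v⟫ = fderiv ℝ f x v := by
  rw [gradient, ← InnerProductSpace.toDual_apply_apply, LinearIsometryEquiv.apply_symm_apply]

variable {S : Euc n → Euc n →L[ℝ] Euc n} {lam : Euc n → ℝ}

lemma DS_apply (hS : Differentiable ℝ S) (x u w : Euc n) :
    fderiv ℝ (fun y => S y w) x u = (fderiv ℝ S x u) w := by
  have h := ((ContinuousLinearMap.apply ℝ (Euc n) w).hasFDerivAt.comp x
    (hS x).hasFDerivAt).fderiv
  have h2 : (fun y => S y w) = (ContinuousLinearMap.apply ℝ (Euc n) w) ∘ S := rfl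
  rw [h2, h]; rfl

lemma identA (hS : Differentiable ℝ S) (hlam : Differentiable ℝ lam)
    {Y : Euc n → Euc n} (hYd : Differentiable ℝ Y)
    (hY : ∀ z, lam z • Y z - S z (Y z) = 0) (x u : Euc n) :
    lam x • (fderiv ℝ Y x u) - S x (fderiv ℝ Y x u) =
      (fderiv ℝ S x u) (Y x) - (fderiv ℝ lam x u) • Y x := by
  have h0 : fderiv ℝ (fun y => lam y • Y y - S y (Y y)) x = 0 := by
    have : (fun y => lam y • Y y - S y (Y y)) = fun _ => (0 : Euc n) := funext hY
    rw [this, fderiv_fun_const]; rfl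
  have hsd : DifferentiableAt ℝ (fun y => lam y • Y y) x := (hlam x).smul (hYd x)
  have hcd : DifferentiableAt ℝ (fun y => S y (Y y)) x := (hS x).clm_apply (hYd x)
  rw [fderiv_fun_sub hsd hcd, fderiv_fun_smul (hlam x) (hYd x), fderiv_clm_apply (hS x) (hYd x)] at h0
  have h1 := congrFun (congrArg (DFunLike.coe) h0) u
  simp only [ContinuousLinearMap.sub_apply, ContinuousLinearMap.add_apply,
    ContinuousLinearMap.smul_apply, ContinuousLinearMap.smulRight_apply,
    ContinuousLinearMap.comp_apply, ContinuousLinearMap.coe_comp',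
    ContinuousLinearMap.flip_apply, ContinuousLinearMap.zero_apply, Function.comp] at h1
  rw [← sub_eq_zero, ← h1]; abel

lemma DSsymm (hS : Differentiable ℝ S)
    (hsymm : ∀ x u v, ⟪S x u, v⟫ = ⟪u, S x v⟫) (x u a b : Euc n) :
    ⟪(fderiv ℝ S x u) a, b⟫ = ⟪a, (fderiv ℝ S x u) b⟫ := by
  have hfa : DifferentiableAt ℝ (fun y => S y a) x := (hS x).clm_apply (differentiableAt_const a)
  have hfb : DifferentiableAt ℝ (fun y => S y b) x := (hS x).clm_apply (differentiableAt_const b)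
  have h : (fun y => ⟪S y a, b⟫) = (fun y => ⟪a, S y b⟫) := funext fun y => hsymm y a b
  have h1 := congrFun (congrArg (DFunLike.coe) (congrArg (fderiv ℝ · x) h)) u
  rw [fderiv_inner_apply ℝ hfa (differentiableAt_const b) u,
    fderiv_inner_apply ℝ (differentiableAt_const a) hfb u] at h1
  simpa [fderiv_const, DS_apply hS] using h1



variable {n : ℕ} {S : Euc n → Euc n →L[ℝ] Euc n} {lam : Euc n → ℝ}

lemma star (hS : Differentiable ℝ S) (hlam : Differentiable ℝ lam)
    (hsymm : ∀ x u v, ⟪S x u, v⟫ = ⟪u, S x v⟫)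
    (hcod' : ∀ x u v, (fderiv ℝ S x u) v = (fderiv ℝ S x v) u)
    {X Y : Euc n → Euc n} (hXd : Differentiable ℝ X) (hYd : Differentiable ℝ Y)
    (hX : ∀ z, lam z • X z - S z (X z) = 0) (hY : ∀ z, lam z • Y z - S z (Y z) = 0)
    (x : Euc n) :
    lam x • fderiv ℝ Y x (X x) - S x (fderiv ℝ Y x (X x)) =
      ⟪X x, Y x⟫ • gradient lam x - (fderiv ℝ lam x (X x)) • Y x := by
  apply ext_inner_right ℝ
  intro ξ
  rw [identA hS hlam hYd hY x (X x)]
  have key : ⟪(fderiv ℝ S x (X x)) (Y x), ξ⟫ = (fderiv ℝ lam x ξ) * ⟪X x, Y x⟫ := by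
    rw [hcod' x (X x) (Y x), DSsymm hS hsymm x (Y x) (X x) ξ, hcod' x (Y x) ξ]
    have hA := identA hS hlam hYd hY x ξ
    have hA' : (fderiv ℝ S x ξ) (Y x) =
        (lam x • fderiv ℝ Y x ξ - S x (fderiv ℝ Y x ξ)) + (fderiv ℝ lam x ξ) • Y x := by
      rw [hA]; abel
    rw [hA', inner_add_right]
    have hz : ⟪X x, lam x • fderiv ℝ Y x ξ - S x (fderiv ℝ Y x ξ)⟫ = 0 := by
      rw [inner_sub_right, real_inner_smul_right, ← hsymm x (X x)]
      have : lam x * ⟪X x, fderiv ℝ Y x ξ⟫ - ⟪S x (X x), fderiv ℝ Y x ξ⟫ =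
          ⟪lam x • X x - S x (X x), fderiv ℝ Y x ξ⟫ := by
        rw [inner_sub_left, real_inner_smul_left]
      rw [this, hX x, inner_zero_left]
    rw [hz, real_inner_smul_right, zero_add, real_inner_comm]
  rw [inner_sub_left, inner_sub_left, key, real_inner_smul_left, real_inner_smul_left]
  rw [inner_gradient]
  ring



variable {n : ℕ} {S : Euc n → Euc n →L[ℝ] Euc n} {lam : Euc n → ℝ}

lemma gradient_eq (lam : Euc n → ℝ) : gradient lam = fun y =>
    (InnerProductSpace.toDual ℝ (Euc n)).symm (fderiv ℝ lam y) := rfl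

lemma gradient_contDiff (hlam : ContDiff ℝ (⊤ : ℕ∞) lam) : ContDiff ℝ (⊤ : ℕ∞) (gradient lam) := by
  rw [gradient_eq]
  exact (InnerProductSpace.toDual ℝ (Euc n)).symm.contDiff.comp
    (hlam.fderiv_right (by simp))

lemma inner_fderiv_gradient (hlam : ContDiff ℝ (⊤ : ℕ∞) lam) (x u ζ : Euc n) :
    ⟪fderiv ℝ (gradient lam) x u, ζ⟫ = fderiv ℝ (fderiv ℝ lam) x u ζ := by
  have hd : DifferentiableAt ℝ (fderiv ℝ lam) x :=
    ((hlam.fderiv_right (m := (⊤ : ℕ∞)) ((by simp))).differentiable (by simp)) x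
  have hE := (InnerProductSpace.toDual ℝ
    (Euc n)).symm.toContinuousLinearEquiv.toContinuousLinearMap.hasFDerivAt
    (x := fderiv ℝ lam x)
  have hcomp := (hE.comp x hd.hasFDerivAt).fderiv
  rw [gradient_eq]
  rw [show (fun y => (InnerProductSpace.toDual ℝ (Euc n)).symm (fderiv ℝ lam y)) =
    ((InnerProductSpace.toDual ℝ
      (Euc n)).symm.toContinuousLinearEquiv.toContinuousLinearMap) ∘ (fderiv ℝ lam) from rfl,
    hcomp]
  rw [ContinuousLinearMap.comp_apply]
  rw [show ((InnerProductSpace.toDual ℝ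
      (Euc n)).symm.toContinuousLinearEquiv.toContinuousLinearMap) (fderiv ℝ (fderiv ℝ lam) x u)
    = (InnerProductSpace.toDual ℝ (Euc n)).symm (fderiv ℝ (fderiv ℝ lam) x u) from rfl]
  rw [← InnerProductSpace.toDual_apply_apply, LinearIsometryEquiv.apply_symm_apply]

lemma spherical_core (hS : ContDiff ℝ (⊤ : ℕ∞) S) (hlam : ContDiff ℝ (⊤ : ℕ∞) lam)
    (hsymm : ∀ x u v, ⟪S x u, v⟫ = ⟪u, S x v⟫)
    (hcod' : ∀ x u v, (fderiv ℝ S x u) v = (fderiv ℝ S x v) u)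
    {η : Euc n → Euc n} (hηd : Differentiable ℝ η)
    (hηperp : ∀ y v, lam y • v - S y v = 0 → ⟪η y, v⟫ = 0)
    (hηg : ∀ y, lam y • η y - S y (η y) - gradient lam y = 0)
    (hconst : ∀ y v, lam y • v - S y v = 0 → fderiv ℝ lam y v = 0)
    {X : Euc n → Euc n} (hXd : Differentiable ℝ X)
    (hX : ∀ z, lam z • X z - S z (X z) = 0) (x : Euc n) :
    lam x • (fderiv ℝ η x (X x)) - S x (fderiv ℝ η x (X x)) = 0 := by
  have hSd : Differentiable ℝ S := hS.differentiable (by simp)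
  have hlamd : Differentiable ℝ lam := hlam.differentiable (by simp)
  have hgd : Differentiable ℝ (gradient lam) :=
    (gradient_contDiff hlam).differentiable (by simp)
  set u := X x with hu
  set D := fderiv ℝ η x u with hD
  -- differentiate the identity T η = grad lam
  have h0 : fderiv ℝ (fun y => lam y • η y - S y (η y) - gradient lam y) x = 0 := by
    rw [show (fun y => lam y • η y - S y (η y) - gradient lam y) =
      fun _ => (0 : Euc n) from funext hηg, fderiv_fun_const]
    rfl
  have hsd : DifferentiableAt ℝ (fun y => lam y • η y) x := (hlamd x).smul (hηd x)
  have hcd : DifferentiableAt ℝ (fun y => S y (η y)) x := (hSd x).clm_apply (hηd x)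
  rw [fderiv_fun_sub (show DifferentiableAt ℝ (fun y => lam y • η y - S y (η y)) x from hsd.sub hcd) (hgd x), fderiv_fun_sub hsd hcd, fderiv_fun_smul (hlamd x) (hηd x),
    fderiv_clm_apply (hSd x) (hηd x)] at h0
  have h1 := congrFun (congrArg (DFunLike.coe) h0) u
  simp only [ContinuousLinearMap.sub_apply, ContinuousLinearMap.add_apply,
    ContinuousLinearMap.smul_apply, ContinuousLinearMap.smulRight_apply,
    ContinuousLinearMap.comp_apply, ContinuousLinearMap.coe_comp',
    ContinuousLinearMap.flip_apply, ContinuousLinearMap.zero_apply, Function.comp] at h1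
  have hdlu : fderiv ℝ lam x u = 0 := hconst x u (hX x)
  have hmain : lam x • D - S x D = (fderiv ℝ S x u) (η x) + fderiv ℝ (gradient lam) x u := by
    rw [← sub_eq_zero, ← h1, hdlu]
    simp only [zero_smul]
    abel
  apply ext_inner_right ℝ
  intro ζ
  rw [inner_zero_left, hmain, inner_add_left]
  -- first term
  have t1 : ⟪(fderiv ℝ S x u) (η x), ζ⟫ = ⟪gradient lam x, fderiv ℝ X x ζ⟫ := by
    rw [DSsymm hSd hsymm x u (η x) ζ, hcod' x u ζ]
    have hA := identA hSd hlamd hXd hX x ζ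
    have hA' : (fderiv ℝ S x ζ) u =
        (lam x • fderiv ℝ X x ζ - S x (fderiv ℝ X x ζ)) + (fderiv ℝ lam x ζ) • X x := by
      rw [hA, hu]; abel
    rw [hA', inner_add_right, real_inner_smul_right, hηperp x (X x) (hX x), mul_zero, add_zero]
    have : ⟪η x, lam x • fderiv ℝ X x ζ - S x (fderiv ℝ X x ζ)⟫ =
        ⟪lam x • η x - S x (η x), fderiv ℝ X x ζ⟫ := by
      rw [inner_sub_right, inner_sub_left, real_inner_smul_right, real_inner_smul_left,
        hsymm x (η x)]
    rw [this, show lam x • η x - S x (η x) = gradient lam x from by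
      have := hηg x; rwa [sub_eq_zero] at this]
  -- second term
  have t2 : ⟪fderiv ℝ (gradient lam) x u, ζ⟫ = -⟪gradient lam x, fderiv ℝ X x ζ⟫ := by
    rw [inner_fderiv_gradient hlam x u ζ,
      (hlam.contDiffAt.isSymmSndFDerivAt (by simp only [minSmoothness_of_isRCLikeNormedField]; exact WithTop.coe_le_coe.2 (le_top : (2 : ℕ∞) ≤ ⊤))).eq u ζ]
    have hzero : (fun y => ⟪gradient lam y, X y⟫) = fun _ => (0 : ℝ) := by
      funext y
      rw [inner_gradient]
      exact hconst y (X y) (hX y)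
    have hF := congrFun (congrArg (DFunLike.coe)
      (congrArg (fderiv ℝ · x) hzero)) ζ
    beta_reduce at hF
    rw [fderiv_inner_apply ℝ (hgd x) (hXd x) ζ] at hF
    rw [show fderiv ℝ (fun _ => (0:ℝ)) x ζ = 0 from by rw [fderiv_fun_const]; rfl] at hF
    have : ⟪fderiv ℝ (gradient lam) x ζ, X x⟫ = -⟪gradient lam x, fderiv ℝ X x ζ⟫ := by
      linarith [hF]
    rw [← this, inner_fderiv_gradient hlam x ζ u, hu]
  rw [t1, t2]
  ring



variable {n : ℕ}

lemma mem_orthogonal_span_range {ι : Type*} (f : ι → Euc n) (z : Euc n)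
    (h : ∀ i, ⟪f i, z⟫ = 0) : z ∈ (Submodule.span ℝ (Set.range f))ᗮ := by
  rw [Submodule.mem_orthogonal]
  intro u hu
  induction hu using Submodule.span_induction with
  | mem u hu => obtain ⟨i, rfl⟩ := hu; exact h i
  | zero => exact inner_zero_left z
  | add u v _ _ hu hv => rw [inner_add_left, hu, hv, add_zero]
  | smul r u _ hu => rw [real_inner_smul_left, hu, mul_zero]

def mulLin (m : ℕ) : (Fin m → Fin m → ℝ) →ₗ[ℝ] ((Fin m → ℝ) →ₗ[ℝ] (Fin m → ℝ)) where
  toFun A :=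
    { toFun := fun c j => ∑ i, A j i * c i
      map_add' := by intro c d; funext j; simp [mul_add, Finset.sum_add_distrib]
      map_smul' := by
        intro r c; funext j
        simp [Finset.mul_sum, mul_comm, mul_left_comm] }
  map_add' := by intro A B; ext c j; simp [add_mul, Finset.sum_add_distrib]
  map_smul' := by intro r A; ext c j; simp [Finset.mul_sum, mul_comm, mul_left_comm]

def matCLM (m : ℕ) : (Fin m → Fin m → ℝ) →ₗ[ℝ] ((Fin m → ℝ) →L[ℝ] (Fin m → ℝ)) :=
  (LinearMap.toContinuousLinearMap :
    ((Fin m → ℝ) →ₗ[ℝ] (Fin m → ℝ)) ≃ₗ[ℝ] ((Fin m → ℝ) →L[ℝ] (Fin m → ℝ))).toLinearMap.comp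
    (mulLin m)

variable {n : ℕ} {S : Euc n → Euc n →L[ℝ] Euc n} {lam : Euc n → ℝ}

lemma eta_contDiff (hS : ContDiff ℝ (⊤ : ℕ∞) S) (hlam : ContDiff ℝ (⊤ : ℕ∞) lam)
    (hglam : ContDiff ℝ (⊤ : ℕ∞) (gradient lam))
    (T : Euc n → Euc n →L[ℝ] Euc n)
    (hT : ∀ x u, T x u = lam x • u - S x u)
    (hTc : ContDiff ℝ (⊤ : ℕ∞) T)
    (hTsymm : ∀ x (u v : Euc n), ⟪T x u, v⟫ = ⟪u, T x v⟫)
    (Elam : Euc n → Submodule ℝ (Euc n))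
    (hker : ∀ x (u : Euc n), u ∈ Elam x ↔ T x u = 0)
    (k : ℕ) (hrank : ∀ x, Module.finrank ℝ (Elam x) = k)
    {η : Euc n → Euc n}
    (hη1 : ∀ x, η x ∈ (Elam x)ᗮ)
    (hη2 : ∀ x, T x (η x) - gradient lam x ∈ Elam x)
    (huniq : ∀ x (w w' : Euc n), w ∈ (Elam x)ᗮ → T x w - gradient lam x ∈ Elam x →
      w' ∈ (Elam x)ᗮ → T x w' - gradient lam x ∈ Elam x → w = w') :
    ContDiff ℝ (⊤ : ℕ∞) η := by
  -- `T x` maps everything into `(Elam x)ᗮ`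
  have hrange : ∀ x (w : Euc n), T x w ∈ (Elam x)ᗮ := by
    intro x w
    rw [Submodule.mem_orthogonal]
    intro u hu
    rw [← hTsymm, (hker x u).1 hu, inner_zero_left]
  -- dimension of the orthogonal complements
  have hperp_rank : ∀ x, Module.finrank ℝ ((Elam x)ᗮ) = n - k := by
    intro x
    have h := Submodule.finrank_add_finrank_orthogonal (K := Elam x)
    rw [hrank x, finrank_euclideanSpace_fin] at h
    omega
  rw [contDiff_iff_contDiffAt]
  intro x₀
  set m : ℕ := Module.finrank ℝ ((Elam x₀)ᗮ) with hm
  -- a basis of `(Elam x₀)ᗮ`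
  set b : Module.Basis (Fin m) ℝ ((Elam x₀)ᗮ) := Module.finBasis ℝ ((Elam x₀)ᗮ) with hb
  set v : Fin m → Euc n := fun i => (b i : Euc n) with hv
  have hv_li : LinearIndependent ℝ v :=
    b.linearIndependent.map' ((Elam x₀)ᗮ).subtype (Submodule.ker_subtype _)
  have hv_mem : ∀ i, v i ∈ (Elam x₀)ᗮ := fun i => (b i).2
  -- the moving frame `W x i = T x (v i)` of `(Elam x)ᗮ`
  set W : Euc n → Fin m → Euc n := fun x i => T x (v i) with hW
  have hW_mem : ∀ x i, W x i ∈ (Elam x)ᗮ := fun x i => hrange x (v i)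
  have hW_cd : ∀ i, ContDiff ℝ (⊤ : ℕ∞) (fun x => W x i) := by
    intro i
    exact hTc.clm_apply contDiff_const
  -- if `W x` is linearly independent then it spans `(Elam x)ᗮ`
  have hspan : ∀ x, LinearIndependent ℝ (W x) →
      Submodule.span ℝ (Set.range (W x)) = (Elam x)ᗮ := by
    intro x hli
    apply Submodule.eq_of_le_of_finrank_le
    · rw [Submodule.span_le]
      rintro _ ⟨i, rfl⟩
      exact hW_mem x i
    · rw [hperp_rank x, finrank_span_eq_card hli, Fintype.card_fin, ← hperp_rank x₀, ← hm]
  -- `W x₀` is linearly independent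
  have hWli₀ : LinearIndependent ℝ (W x₀) := by
    rw [Fintype.linearIndependent_iff]
    intro c hc i
    have hsum : T x₀ (∑ j, c j • v j) = 0 := by
      rw [map_sum]
      simpa [hW] using hc
    have hmem1 : (∑ j, c j • v j) ∈ Elam x₀ := (hker x₀ _).2 hsum
    have hmem2 : (∑ j, c j • v j) ∈ (Elam x₀)ᗮ :=
      Submodule.sum_mem _ fun j _ => Submodule.smul_mem _ _ (hv_mem j)
    have h0 : (∑ j, c j • v j) = 0 := by
      have := Submodule.mem_inf.2 ⟨hmem1, hmem2⟩
      rwa [Submodule.inf_orthogonal_eq_bot, Submodule.mem_bot] at this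
    exact (Fintype.linearIndependent_iff.1 hv_li) c h0 i
  -- the matrix of the linear system and the right-hand side
  set MM : Euc n → Fin m → Fin m → ℝ := fun x j i => ⟪T x (W x i), W x j⟫ with hMM
  set bb : Euc n → Fin m → ℝ := fun x j => ⟪gradient lam x, W x j⟫ with hbb
  set Φ : Euc n → ((Fin m → ℝ) →L[ℝ] (Fin m → ℝ)) := fun x => matCLM m (MM x) with hΦ
  have hΦ_apply : ∀ x c j, Φ x c j = ∑ i, MM x j i * c i := fun x c j => rfl
  have hMM_cd : ContDiff ℝ (⊤ : ℕ∞) MM := by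
    rw [contDiff_pi]
    intro j
    rw [contDiff_pi]
    intro i
    exact ContDiff.inner ℝ (hTc.clm_apply (hW_cd i)) (hW_cd j)
  have hbb_cd : ContDiff ℝ (⊤ : ℕ∞) bb := by
    rw [contDiff_pi]
    intro j
    exact ContDiff.inner ℝ hglam (hW_cd j)
  have hΦ_cd : ContDiff ℝ (⊤ : ℕ∞) Φ :=
    (LinearMap.toContinuousLinearMap (matCLM m)).contDiff.comp hMM_cd
  -- key algebraic fact: evaluating `Φ` against combinations of the `W x i`
  have hΦ_inner : ∀ x (c : Fin m → ℝ) j,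
      Φ x c j = ⟪T x (∑ i, c i • W x i), W x j⟫ := by
    intro x c j
    rw [hΦ_apply, map_sum, sum_inner]
    simp only [map_smul, real_inner_smul_left]
    exact Finset.sum_congr rfl fun i _ => mul_comm _ _
  -- `Φ x₀` is a unit
  have hΦ_inj : ∀ x, Function.Injective (Φ x) → LinearIndependent ℝ (W x) := by
    intro x hinj
    rw [Fintype.linearIndependent_iff]
    intro c hc i
    have : Φ x c = 0 := by
      funext j
      rw [hΦ_inner x c j, hc, map_zero, inner_zero_left]
      rfl
    have hc0 : c = 0 := by
      apply hinj
      rw [this, map_zero]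
    exact congrFun hc0 i
  have hunit₀ : IsUnit (Φ x₀) := by
    rw [ContinuousLinearMap.isUnit_iff_bijective]
    have hinj : Function.Injective (Φ x₀) := by
      have key : ∀ c : Fin m → ℝ, Φ x₀ c = 0 → c = 0 := by
        intro c hc
        -- T x₀ u with u := ∑ c i • W x₀ i is orthogonal to all W x₀ j
        set u : Euc n := ∑ i, c i • W x₀ i with hu
        have hcW : ∀ j, ⟪T x₀ u, W x₀ j⟫ = 0 := by
          intro j
          have h5 := congrFun hc j
          rw [hΦ_inner x₀ c j] at h5
          rw [real_inner_comm]
          rw [real_inner_comm] at h5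
          exact h5
        have humem : u ∈ (Elam x₀)ᗮ :=
          Submodule.sum_mem _ fun j _ => Submodule.smul_mem _ _ (hW_mem x₀ j)
        have hTu_perp : T x₀ u ∈ ((Elam x₀)ᗮ)ᗮ := by
          rw [← hspan x₀ hWli₀]
          exact mem_orthogonal_span_range (W x₀) (T x₀ u) fun j =>
            (real_inner_comm _ _).trans (hcW j)
        have hTu_mem : T x₀ u ∈ (Elam x₀)ᗮ := hrange x₀ u
        have hTu0 : T x₀ u = 0 := by
          have := Submodule.mem_inf.2 ⟨hTu_mem, hTu_perp⟩
          rwa [Submodule.inf_orthogonal_eq_bot, Submodule.mem_bot] at this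
        have humem2 : u ∈ Elam x₀ := (hker x₀ u).2 hTu0
        have hu0 : u = 0 := by
          have := Submodule.mem_inf.2 ⟨humem2, humem⟩
          rwa [Submodule.inf_orthogonal_eq_bot, Submodule.mem_bot] at this
        funext i
        exact (Fintype.linearIndependent_iff.1 hWli₀) c hu0 i
      intro a b hab
      have h6 : Φ x₀ (a - b) = 0 := by rw [map_sub, hab, sub_self]
      have := key _ h6
      rwa [sub_eq_zero] at this
    exact ⟨hinj, LinearMap.injective_iff_surjective.1
      (LinearMap.ker_eq_bot.1 (LinearMap.ker_eq_bot.2 (by exact_mod_cast hinj)))⟩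
  -- the local smooth solution
  set c : Euc n → Fin m → ℝ := fun x => Ring.inverse (Φ x) (bb x) with hc
  set η' : Euc n → Euc n := fun x => ∑ i, c x i • W x i with hη'
  have hc_cd : ContDiffAt ℝ (⊤ : ℕ∞) c x₀ := by
    have h1 : ContDiffAt ℝ (⊤ : ℕ∞) (fun x => Ring.inverse (Φ x)) x₀ := by
      have := contDiffAt_ringInverse ℝ (n := (⊤ : ℕ∞)) (hunit₀.unit)
      have h2 : ContDiffAt ℝ (⊤ : ℕ∞) Φ x₀ := hΦ_cd.contDiffAt
      have h3 := this.comp x₀ h2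
      exact h3
    exact h1.clm_apply hbb_cd.contDiffAt
  have hη'_cd : ContDiffAt ℝ (⊤ : ℕ∞) η' x₀ := by
    apply ContDiffAt.sum
    intro i _
    exact (contDiffAt_pi.1 hc_cd i).smul (hW_cd i).contDiffAt
  have hU : ∀ᶠ x in nhds x₀, IsUnit (Φ x) := by
    have hmem : {y : (Fin m → ℝ) →L[ℝ] (Fin m → ℝ) | IsUnit y} ∈ nhds (Φ x₀) :=
      Units.isOpen.mem_nhds hunit₀
    exact hΦ_cd.continuous.continuousAt.preimage_mem_nhds hmem
  have heq : ∀ᶠ x in nhds x₀, η x = η' x := by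
    filter_upwards [hU] with x hx
    have hsolve : Φ x (c x) = bb x := by
      obtain ⟨u, hu⟩ := hx
      show Φ x (Ring.inverse (Φ x) (bb x)) = bb x
      rw [← hu, Ring.inverse_unit]
      have h7 : (↑u : (Fin m → ℝ) →L[ℝ] (Fin m → ℝ)) * ↑u⁻¹ = 1 := u.mul_inv
      rw [← ContinuousLinearMap.mul_apply, h7, ContinuousLinearMap.one_apply]
    have hWli : LinearIndependent ℝ (W x) :=
      hΦ_inj x (ContinuousLinearMap.isUnit_iff_bijective.1 hx).1
    have hmem' : η' x ∈ (Elam x)ᗮ :=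
      Submodule.sum_mem _ fun j _ => Submodule.smul_mem _ _ (hW_mem x j)
    have hTmem : T x (η' x) - gradient lam x ∈ Elam x := by
      rw [← Submodule.orthogonal_orthogonal (Elam x), ← hspan x hWli]
      apply mem_orthogonal_span_range
      intro j
      rw [inner_sub_right]
      have h8 : ⟪W x j, T x (η' x)⟫ = Φ x (c x) j := by
        rw [hΦ_inner x (c x) j, real_inner_comm]
      have h9 : ⟪W x j, gradient lam x⟫ = bb x j := real_inner_comm _ _
      rw [h8, h9, hsolve, sub_self]
    exact (huniq x (η' x) (η x) hmem' hTmem (hη1 x) (hη2 x)).symm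
  exact hη'_cd.congr_of_eventuallyEq heq


end CodazziAux


open CodazziAux in
/-- Reckziegel: the constant-rank eigenbundle `E_λ = ker(λ·id − S)` of a
Codazzi tensor `S` (on a flat Euclidean domain, where the Levi-Civita connection is the
ordinary derivative) is umbilical, with mean curvature normal `η` satisfying
`(λ·id − S) η = (grad λ)_{E_λᗮ}`; if moreover `λ` is constant along `E_λ`, then `E_λ`
is spherical.  Umbilicity of `E_λ` with mean curvature normal `η` is expressed as
`∇_X Y − ⟨X,Y⟩ η ∈ E_λ` for all sections `X, Y` of `E_λ`, and the spherical condition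
as `∇_X η ∈ E_λ`. -/
theorem codazzi_eigenbundle_umbilical (n : ℕ)
    (S : EuclideanSpace ℝ (Fin n) →
      (EuclideanSpace ℝ (Fin n) →L[ℝ] EuclideanSpace ℝ (Fin n)))
    (lam : EuclideanSpace ℝ (Fin n) → ℝ) (k : ℕ)
    (hS : ContDiff ℝ (⊤ : ℕ∞) fun x => S x) (hlam : ContDiff ℝ (⊤ : ℕ∞) lam)
    (hsymm : ∀ x u v, ⟪S x u, v⟫ = ⟪u, S x v⟫)
    (hcodazzi : ∀ x u v, fderiv ℝ (fun y => S y v) x u = fderiv ℝ (fun y => S y u) x v) :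
    ∀ Elam : EuclideanSpace ℝ (Fin n) →
        Submodule ℝ (EuclideanSpace ℝ (Fin n)),
      (Elam = fun x => LinearMap.ker (lam x • (LinearMap.id : EuclideanSpace ℝ (Fin n) →ₗ[ℝ]
        EuclideanSpace ℝ (Fin n)) - (S x : EuclideanSpace ℝ (Fin n) →ₗ[ℝ]
          EuclideanSpace ℝ (Fin n)))) →
      (∀ x, Module.finrank ℝ (Elam x) = k) →
      ∃ η : EuclideanSpace ℝ (Fin n) → EuclideanSpace ℝ (Fin n),
        ContDiff ℝ (⊤ : ℕ∞) η ∧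
        (∀ x, η x ∈ (Elam x)ᗮ) ∧
        -- `(λ·id − S) η = (grad λ)_{E_λᗮ}`:
        (∀ x, lam x • η x - S x (η x) - gradient lam x ∈ Elam x) ∧
        -- umbilicity:
        (∀ X Y : EuclideanSpace ℝ (Fin n) → EuclideanSpace ℝ (Fin n),
          Differentiable ℝ X → Differentiable ℝ Y →
          (∀ z, X z ∈ Elam z) → (∀ z, Y z ∈ Elam z) →
          ∀ x, fderiv ℝ Y x (X x) - ⟪X x, Y x⟫ • η x ∈ Elam x) ∧
        -- sphericity when `λ` is constant along `E_λ`: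
        ((∀ x u, u ∈ Elam x → fderiv ℝ lam x u = 0) →
          ∀ X : EuclideanSpace ℝ (Fin n) → EuclideanSpace ℝ (Fin n),
            Differentiable ℝ X → (∀ z, X z ∈ Elam z) →
            ∀ x, fderiv ℝ η x (X x) ∈ Elam x) := by
  intro Elam hE hrank
  have hSd : Differentiable ℝ S := hS.differentiable (by simp)
  have hlamd : Differentiable ℝ lam := hlam.differentiable (by simp)
  have hmem : ∀ x (u : Euc n), u ∈ Elam x ↔ lam x • u - S x u = 0 := by
    intro x u
    rw [hE]
    simp [LinearMap.mem_ker, sub_eq_zero]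
  set T : Euc n → Euc n →L[ℝ] Euc n :=
    fun x => lam x • ContinuousLinearMap.id ℝ (Euc n) - S x with hTdef
  have hT_apply : ∀ x (u : Euc n), T x u = lam x • u - S x u := by
    intro x u
    simp [hTdef]
  have hkerT : ∀ x (u : Euc n), u ∈ Elam x ↔ T x u = 0 := by
    intro x u
    rw [hmem, hT_apply]
  have hTsymm : ∀ x (u v : Euc n), ⟪T x u, v⟫ = ⟪u, T x v⟫ := by
    intro x u v
    rw [hT_apply, hT_apply, inner_sub_left, inner_sub_right, real_inner_smul_left,
      real_inner_smul_right, hsymm x u v]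
  have hTc : ContDiff ℝ (⊤ : ℕ∞) T := (hlam.smul contDiff_const).sub hS
  have hglam : ContDiff ℝ (⊤ : ℕ∞) (gradient lam) := gradient_contDiff hlam
  have hcod' : ∀ x (u v : Euc n), (fderiv ℝ S x u) v = (fderiv ℝ S x v) u := by
    intro x u v
    rw [← DS_apply hSd, ← DS_apply hSd]
    exact hcodazzi x u v
  have hex : ∀ x, ∃ w : Euc n, w ∈ (Elam x)ᗮ ∧ T x w - gradient lam x ∈ Elam x :=
    fun x => exists_eta (T x) (hTsymm x) (Elam x) (hkerT x) (gradient lam x)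
  choose η hη1 hη2 using hex
  have hcd : ContDiff ℝ (⊤ : ℕ∞) η :=
    eta_contDiff hS hlam hglam T hT_apply hTc hTsymm Elam hkerT k hrank hη1 hη2
      (fun x w w' h1 h2 h1' h2' =>
        eta_unique (T x) (hTsymm x) (Elam x) (hkerT x) (gradient lam x) w w' h1 h2 h1' h2')
  refine ⟨η, hcd, hη1, ?_, ?_, ?_⟩
  · intro x
    have := hη2 x
    rwa [hT_apply] at this
  · -- umbilicity
    intro X Y hXd hYd hX hY x
    have hX' : ∀ z, lam z • X z - S z (X z) = 0 := fun z => (hmem z (X z)).1 (hX z)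
    have hY' : ∀ z, lam z • Y z - S z (Y z) = 0 := fun z => (hmem z (Y z)).1 (hY z)
    apply mem_of_T_mem (T x) (hTsymm x) (Elam x) (hkerT x)
    have h1 : T x (fderiv ℝ Y x (X x)) =
        ⟪X x, Y x⟫ • gradient lam x - (fderiv ℝ lam x (X x)) • Y x := by
      rw [hT_apply]
      exact star hSd hlamd hsymm hcod' hXd hYd hX' hY' x
    have h2 : T x (fderiv ℝ Y x (X x) - ⟪X x, Y x⟫ • η x) =
        ⟪X x, Y x⟫ • (gradient lam x - T x (η x)) - (fderiv ℝ lam x (X x)) • Y x := by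
      rw [map_sub, map_smul, h1, smul_sub]
      abel
    rw [h2]
    apply Submodule.sub_mem
    · apply Submodule.smul_mem
      have := (Elam x).neg_mem (hη2 x)
      rwa [neg_sub] at this
    · exact Submodule.smul_mem _ _ (hY x)
  · -- sphericity
    intro hconst X hXd hX x
    have hX' : ∀ z, lam z • X z - S z (X z) = 0 := fun z => (hmem z (X z)).1 (hX z)
    have hconst' : ∀ y (v : Euc n), lam y • v - S y v = 0 → fderiv ℝ lam y v = 0 :=
      fun y v hv => hconst y v ((hmem y v).2 hv)
    have hg_perp : ∀ y, gradient lam y ∈ (Elam y)ᗮ := by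
      intro y
      rw [Submodule.mem_orthogonal]
      intro u hu
      rw [real_inner_comm, inner_gradient]
      exact hconst y u hu
    have hηg : ∀ y, lam y • η y - S y (η y) - gradient lam y = 0 := by
      intro y
      rw [← hT_apply]
      have hmem1 : T y (η y) - gradient lam y ∈ Elam y := hη2 y
      have hmem2 : T y (η y) - gradient lam y ∈ (Elam y)ᗮ :=
        Submodule.sub_mem _ (Trange (T y) (hTsymm y) (Elam y) (hkerT y) (η y)) (hg_perp y)
      have := Submodule.mem_inf.2 ⟨hmem1, hmem2⟩
      rwa [Submodule.inf_orthogonal_eq_bot, Submodule.mem_bot] at this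
    have hηperp : ∀ y (v : Euc n), lam y • v - S y v = 0 → ⟪η y, v⟫ = 0 := by
      intro y v hv
      exact (Submodule.mem_orthogonal' (Elam y) (η y)).1 (hη1 y) v ((hmem y v).2 hv)
    have hcore := spherical_core hS hlam hsymm hcod' (hcd.differentiable (by simp))
      hηperp hηg hconst' hXd hX' x
    exact (hmem x _).2 hcore
end
end

section
/- Let f : M^n → R^N be an isometric immersion and F : M^n → R^N a smooth map with dF = df ∘ S for a (1,1)-tensor S on M. If S is symmetric with respect to the induced metric, then S is a Codazzi tensor and S commutes with the second fundamental form of f, i.e., α_f(X, SY) = α_f(SX, Y) for all X, Y. -/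
open scoped RealInnerProductSpace

noncomputable section

/-- if `f : M^n → ℝ^N` is an isometric immersion (flat Euclidean domain,
so the Levi-Civita connection of the induced metric is the ordinary derivative and the
second fundamental form `α_f(u,v)` is the second derivative `D²f(u,v)`), and
`F : M^n → ℝ^N` satisfies `dF = df ∘ S` for a symmetric `(1,1)`-tensor `S`, then `S`
is a Codazzi tensor and commutes with the second fundamental form:
`α_f(X, SY) = α_f(SX, Y)`. -/
theorem combescure_tensor_is_commuting_codazzi (n N : ℕ)
    (f F : EuclideanSpace ℝ (Fin n) → EuclideanSpace ℝ (Fin N))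
    (S : EuclideanSpace ℝ (Fin n) →
      (EuclideanSpace ℝ (Fin n) →L[ℝ] EuclideanSpace ℝ (Fin n)))
    (hf : ContDiff ℝ (⊤ : ℕ∞) f) (hF : ContDiff ℝ (⊤ : ℕ∞) F) (hS : ContDiff ℝ (⊤ : ℕ∞) fun x => S x)
    (hfiso : ∀ x u v, ⟪fderiv ℝ f x u, fderiv ℝ f x v⟫ = ⟪u, v⟫)
    (hdF : ∀ x u, fderiv ℝ F x u = fderiv ℝ f x (S x u))
    (hsymmS : ∀ x u v, ⟪S x u, v⟫ = ⟪u, S x v⟫) :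
    -- `S` is a Codazzi tensor:
    (∀ x u v, fderiv ℝ (fun y => S y v) x u = fderiv ℝ (fun y => S y u) x v) ∧
    -- `S` commutes with the second fundamental form of `f`:
    (∀ x u v, fderiv ℝ (fun y => fderiv ℝ f y u) x (S x v)
      = fderiv ℝ (fun y => fderiv ℝ f y (S x u)) x v) := by
  have hf' : ContDiff ℝ ((⊤:ℕ∞) : WithTop ℕ∞) f := hf.of_le (by simp)
  have hF' : ContDiff ℝ ((⊤:ℕ∞) : WithTop ℕ∞) F := hF.of_le (by simp)
  have hfdiff : Differentiable ℝ f := hf'.differentiable (by norm_num)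
  have hDfdiff : Differentiable ℝ (fderiv ℝ f) :=
    ((contDiff_infty_iff_fderiv.mp hf').2).differentiable (by norm_num)
  have hFdiff : Differentiable ℝ F := hF'.differentiable (by norm_num)
  have hDFdiff : Differentiable ℝ (fderiv ℝ F) :=
    ((contDiff_infty_iff_fderiv.mp hF').2).differentiable (by norm_num)
  have hSdiff : Differentiable ℝ (fun x => S x) := (hS.of_le (by exact_mod_cast (le_top : (1:ℕ∞) ≤ ⊤))).differentiable one_ne_zero
  -- evaluation of second derivative
  have hev : ∀ x u w, fderiv ℝ (fun y => fderiv ℝ f y u) x w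
      = (fderiv ℝ (fderiv ℝ f) x w) u := by
    intro x u w
    have h := fderiv_clm_apply (hDfdiff x) (differentiableAt_const u)
    simp only [fderiv_fun_const, Pi.zero_apply, ContinuousLinearMap.comp_zero, zero_add] at h
    rw [h]; rfl
  -- symmetry of second derivative of f
  have hsymf : ∀ x u v, (fderiv ℝ (fderiv ℝ f) x u) v = (fderiv ℝ (fderiv ℝ f) x v) u := by
    intro x u v
    exact second_derivative_symmetric (fun y => (hfdiff y).hasFDerivAt)
      (hDfdiff x).hasFDerivAt u v
  -- differentiability of y ↦ fderiv f y u
  have hdev : ∀ (u : EuclideanSpace ℝ (Fin n)),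
      Differentiable ℝ (fun y => fderiv ℝ f y u) :=
    fun u => hDfdiff.clm_apply (differentiable_const u)
  -- orthogonality of second derivative to first derivative
  have key : ∀ x u v w, ⟪fderiv ℝ f x u, (fderiv ℝ (fderiv ℝ f) x w) v⟫
      + ⟪(fderiv ℝ (fderiv ℝ f) x w) u, fderiv ℝ f x v⟫ = 0 := by
    intro x u v w
    have hconst : (fun y => ⟪fderiv ℝ f y u, fderiv ℝ f y v⟫)
        = fun _ => (⟪u, v⟫ : ℝ) := funext fun y => hfiso y u v
    have h0 : fderiv ℝ (fun y => ⟪fderiv ℝ f y u, fderiv ℝ f y v⟫) x w = 0 := by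
      rw [hconst]; simp
    rw [fderiv_inner_apply (𝕜 := ℝ) ((hdev u) x) ((hdev v) x) w] at h0
    rw [hev, hev] at h0
    exact h0
  have horth : ∀ x u v w, ⟪(fderiv ℝ (fderiv ℝ f) x u) v, fderiv ℝ f x w⟫ = 0 := by
    intro x u v w
    have k1 := key x w v u
    have k2 := key x v u w
    have k3 := key x u w v
    rw [real_inner_comm] at k1 k2 k3
    rw [hsymf x u w] at k1
    rw [hsymf x w v] at k2
    rw [hsymf x v u] at k3
    linarith
  -- derivative of y ↦ S y v
  have hSv : ∀ (v : EuclideanSpace ℝ (Fin n)),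
      Differentiable ℝ (fun y => S y v) :=
    fun v => hSdiff.clm_apply (differentiable_const v)
  -- second derivative of F decomposed
  have eq1 : ∀ x u v, (fderiv ℝ (fderiv ℝ F) x u) v
      = fderiv ℝ f x (fderiv ℝ (fun y => S y v) x u)
        + (fderiv ℝ (fderiv ℝ f) x u) (S x v) := by
    intro x u v
    have hevF : ∀ x u w, fderiv ℝ (fun y => fderiv ℝ F y u) x w
        = (fderiv ℝ (fderiv ℝ F) x w) u := by
      intro x u w
      have h := fderiv_clm_apply (hDFdiff x) (differentiableAt_const u)
      simp only [fderiv_fun_const, Pi.zero_apply, ContinuousLinearMap.comp_zero, zero_add] at h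
      rw [h]; rfl
    rw [← hevF x v u]
    have hfun : (fun y => fderiv ℝ F y v) = fun y => fderiv ℝ f y (S y v) :=
      funext fun y => hdF y v
    rw [hfun]
    have h := fderiv_clm_apply (c := fderiv ℝ f) (u := fun y => S y v)
      (hDfdiff x) ((hSv v) x)
    rw [h]
    simp [ContinuousLinearMap.add_apply]
  -- symmetry of second derivative of F
  have hsymF : ∀ x u v, (fderiv ℝ (fderiv ℝ F) x u) v
      = (fderiv ℝ (fderiv ℝ F) x v) u := by
    intro x u v
    exact second_derivative_symmetric (fun y => (hFdiff y).hasFDerivAt)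
      (hDFdiff x).hasFDerivAt u v
  -- the master identity
  have master : ∀ x u v,
      fderiv ℝ f x (fderiv ℝ (fun y => S y v) x u) + (fderiv ℝ (fderiv ℝ f) x u) (S x v)
      = fderiv ℝ f x (fderiv ℝ (fun y => S y u) x v)
        + (fderiv ℝ (fderiv ℝ f) x v) (S x u) := by
    intro x u v
    rw [← eq1, ← eq1, hsymF]
  -- Codazzi
  have codazzi : ∀ x u v,
      fderiv ℝ (fun y => S y v) x u = fderiv ℝ (fun y => S y u) x v := by
    intro x u v
    apply ext_inner_right ℝ
    intro w
    have h := congrArg (fun z => ⟪z, fderiv ℝ f x w⟫) (master x u v)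
    simp only [inner_add_left] at h
    rw [horth, horth, hfiso, hfiso] at h
    simpa using h
  refine ⟨codazzi, ?_⟩
  intro x u v
  have h := master x u v
  rw [codazzi x u v] at h
  have h2 : (fderiv ℝ (fderiv ℝ f) x u) (S x v) = (fderiv ℝ (fderiv ℝ f) x v) (S x u) := by
    have := add_left_cancel h
    exact this
  rw [hev, hev, hsymf x (S x v) u, h2, hsymf x v (S x u)]
end
end

section
/- With notation as in the Frenet ODE system: if (λ, λ', V2,...,V_{N1}) solves the system, then the curve γ = λ' α' + Σ_{j=2}^{N1} V_j e_j satisfies γ' = λ α'. -/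
/-!
Put `b j := k_j (V_{j+1} e_j + V_j e_{j+1})`. By the Frenet equations and the ODE system, the
derivative `V_j' e_j + V_j e_j'` of the `j`-th summand of `γ` is `λ e₁ + b₁` for `j = 1`,
`b_j - b_{j-1}` for `1 < j < N1` and `-b_{N1-1}` for `j = N1`, so the sum telescopes to `λ e₁`.
-/

theorem deriv_sum_smul {ι F : Type*} [NormedAddCommGroup F] [NormedSpace ℝ F]
    (s : Finset ι) {V : ι → ℝ → ℝ} {e : ι → ℝ → F} {t : ℝ}
    (hV : ∀ j ∈ s, DifferentiableAt ℝ (V j) t)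
    (he : ∀ j ∈ s, DifferentiableAt ℝ (e j) t) :
    deriv (fun r => ∑ j ∈ s, V j r • e j r) t
      = ∑ j ∈ s, (V j t • deriv (e j) t + deriv (V j) t • e j t) := by
  rw [deriv_fun_sum (A := fun j r => V j r • e j r) fun j hj =>
    (hV j hj).smul (he j hj)]
  exact Finset.sum_congr rfl fun j hj => deriv_fun_smul (hV j hj) (he j hj)

section Telescoping

variable {M : Type*} [AddCommGroup M] {N : ℕ} {A b : ℕ → M} {x : M}

theorem sum_Icc_one_eq_add_of_telescoping (h1 : A 1 = x + b 1)
    (hmid : ∀ j, 2 ≤ j → j ≤ N - 1 → A j = b j - b (j - 1)) :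
    ∀ n, 1 ≤ n → n ≤ N - 1 → ∑ j ∈ Finset.Icc 1 n, A j = x + b n := by
  intro n hn
  induction n, hn using Nat.le_induction with
  | base => simp [h1]
  | succ n hn ih =>
    intro hle
    rw [Finset.sum_Icc_succ_top (by omega), ih (by omega), hmid (n + 1) (by omega) hle,
      Nat.add_sub_cancel]
    abel

theorem sum_Icc_one_eq_of_telescoping (hN : 2 ≤ N) (h1 : A 1 = x + b 1)
    (hmid : ∀ j, 2 ≤ j → j ≤ N - 1 → A j = b j - b (j - 1)) (hlast : A N = -b (N - 1)) :
    ∑ j ∈ Finset.Icc 1 N, A j = x := by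
  obtain ⟨n, rfl⟩ : ∃ n, N = n + 1 := ⟨N - 1, by omega⟩
  rw [Finset.sum_Icc_succ_top (by omega),
    sum_Icc_one_eq_add_of_telescoping h1 hmid n (by omega) (by omega), hlast, Nat.add_sub_cancel]
  abel

end Telescoping

theorem gamma_derivative_eq_lambda_tangent_general (N1 : ℕ) (hN1 : 2 ≤ N1)
    {F : Type*} [NormedAddCommGroup F] [NormedSpace ℝ F]
    (k : ℕ → ℝ → ℝ) (e : ℕ → ℝ → F) (lam : ℝ → ℝ) (V : ℕ → ℝ → ℝ)
    (he : ∀ j, Differentiable ℝ (e j))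
    (hV : ∀ j, Differentiable ℝ (V j))
    -- Frenet equations:
    (hfr1 : ∀ t, deriv (e 1) t = k 1 t • e 2 t)
    (hfrj : ∀ j, 2 ≤ j → j ≤ N1 - 1 →
      ∀ t, deriv (e j) t = -(k (j - 1) t) • e (j - 1) t + k j t • e (j + 1) t)
    (hfrN : ∀ t, deriv (e N1) t = -(k (N1 - 1) t) • e (N1 - 1) t)
    -- the ODE system:
    (h2 : ∀ t, deriv (V 1) t = lam t + k 1 t * V 2 t)
    (h3 : ∀ j, 2 ≤ j → j ≤ N1 - 1 →
      ∀ t, deriv (V j) t = -(k (j - 1) t * V (j - 1) t) + k j t * V (j + 1) t)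
    (h4 : ∀ t, deriv (V N1) t = -(k (N1 - 1) t * V (N1 - 1) t)) :
    ∀ t, deriv (fun s => ∑ j ∈ Finset.Icc 1 N1, V j s • e j s) t
      = lam t • e 1 t := by
  intro t
  rw [deriv_sum_smul _ (fun j _ => hV j t) (fun j _ => he j t)]
  refine sum_Icc_one_eq_of_telescoping
    (b := fun j => k j t • (V (j + 1) t • e j t + V j t • e (j + 1) t)) hN1 ?first ?middle ?last
  case first =>
    rw [hfr1, h2]
    module
  case middle =>
    intro j hj hjN
    obtain ⟨i, rfl⟩ : ∃ i, j = i + 1 := ⟨j - 1, by omega⟩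
    rw [hfrj _ hj hjN, h3 _ hj hjN, Nat.add_sub_cancel]
    module
  case last =>
    rw [hfrN, h4, Nat.sub_add_cancel (by omega : 1 ≤ N1)]
    module

/-- if `(λ, λ' = V₁, V₂, …, V_{N1})` solves the Frenet ODE system
associated to a unit-speed curve `α` with Frenet frame `e₁ = α', e₂, …, e_{N1}`, then
the curve `γ = λ'α' + Σ_{j=2}^{N1} V_j e_j = Σ_{j=1}^{N1} V_j e_j` satisfies
`γ' = λ α'`. -/
theorem gamma_derivative_eq_lambda_tangent (N1 : ℕ) (hN1 : 2 ≤ N1)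
    {F : Type*} [NormedAddCommGroup F] [NormedSpace ℝ F]
    (α : ℝ → F) (k : ℕ → ℝ → ℝ) (e : ℕ → ℝ → F) (lam : ℝ → ℝ) (V : ℕ → ℝ → ℝ)
    (hα : Differentiable ℝ α) (he : ∀ j, Differentiable ℝ (e j))
    (hV : ∀ j, Differentiable ℝ (V j)) (hlam : Differentiable ℝ lam)
    (hunit : ∀ t, ‖deriv α t‖ = 1)
    (he1 : ∀ t, e 1 t = deriv α t)
    -- Frenet equations:
    (hfr1 : ∀ t, deriv (e 1) t = k 1 t • e 2 t)
    (hfrj : ∀ j, 2 ≤ j → j ≤ N1 - 1 →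
      ∀ t, deriv (e j) t = -(k (j - 1) t) • e (j - 1) t + k j t • e (j + 1) t)
    (hfrN : ∀ t, deriv (e N1) t = -(k (N1 - 1) t) • e (N1 - 1) t)
    -- the ODE system:
    (h1 : ∀ t, deriv lam t = V 1 t)
    (h2 : ∀ t, deriv (V 1) t = lam t + k 1 t * V 2 t)
    (h3 : ∀ j, 2 ≤ j → j ≤ N1 - 1 →
      ∀ t, deriv (V j) t = -(k (j - 1) t * V (j - 1) t) + k j t * V (j + 1) t)
    (h4 : ∀ t, deriv (V N1) t = -(k (N1 - 1) t * V (N1 - 1) t)) :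
    ∀ t, deriv (fun s => ∑ j ∈ Finset.Icc 1 N1, V j s • e j s) t
      = lam t • e 1 t :=
  gamma_derivative_eq_lambda_tangent_general N1 hN1 k e lam V he hV hfr1 hfrj hfrN h2 h3 h4
end
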